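/- arXiv:nlin/0510020 — 3 statements merged into one kernel-verified Lean document; each statement's English description precedes it below -/
import Mathlib

section
/- Let (u, q_1,…,q_N, r_1,…,r_N) solve the KPESCS and let (f, V, S_1,…,S_N) be an eigenfunction datum for this solution with f nowhere vanishing. Then the tuple (ũ, q̃_1,…,q̃_N, r̃_1,…,r̃_N) defined by ũ := u + 2(f_x/f)_x, q̃_j := f·(q_j/f)_x, and r̃_j := −S_j/f again solves the KPESCS. (This is the auto-Bäcklund transformation T_1[f] of the KP hierarchy with self-consistent sources, in the case k=2, n=3.) -/
noncomputable section

open Finset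

abbrev Pt3 : Type := ℝ × ℝ × ℝ

/-- partial derivative in the first coordinate `x`. -/
def px (F : Pt3 → ℝ) : Pt3 → ℝ := fun p => deriv (fun s => F (s, p.2.1, p.2.2)) p.1

/-- partial derivative in the second coordinate `y`. -/
def py (F : Pt3 → ℝ) : Pt3 → ℝ := fun p => deriv (fun s => F (p.1, s, p.2.2)) p.2.1

/-- partial derivative in the third coordinate `t`. -/
def pt (F : Pt3 → ℝ) : Pt3 → ℝ := fun p => deriv (fun s => F (p.1, p.2.1, s)) p.2.2

/-- The KP equation with self-consistent sources (KPESCS). -/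
def SolvesKPESCS (N : ℕ) (u : Pt3 → ℝ) (q r : Fin N → Pt3 → ℝ) : Prop :=
  (∀ p : Pt3,
      px (fun p' => 4 * pt u p' - 6 * u p' * px u p' - px (px (px u)) p'
            + 8 * px (fun p'' => ∑ j, q j p'' * r j p'') p') p
        - 3 * py (py u) p = 0) ∧
  (∀ j, ∀ p : Pt3, py (q j) p = px (px (q j)) p + u p * q j p) ∧
  (∀ j, ∀ p : Pt3, py (r j) p = -(px (px (r j)) p) - u p * r j p)

/-- An eigenfunction datum `(f, V, S₁, …, S_N)` for a solution of the KPESCS. -/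
def KPEigenDatum (N : ℕ) (u : Pt3 → ℝ) (q r : Fin N → Pt3 → ℝ)
    (f V : Pt3 → ℝ) (S : Fin N → Pt3 → ℝ) : Prop :=
  (∀ p : Pt3, px V p = py u p) ∧
  (∀ j, ∀ p : Pt3, px (S j) p = r j p * f p) ∧
  (∀ j, ∀ p : Pt3, py (S j) p = r j p * px f p - px (r j) p * f p) ∧
  (∀ p : Pt3, py f p = px (px f) p + u p * f p) ∧
  (∀ p : Pt3, pt f p = px (px (px f)) p + (3/2) * u p * px f p
      + (3/4) * (px u p + V p) * f p + ∑ j, q j p * S j p)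

namespace KPaux

def E1 : Pt3 := (1, 0, 0)
def E2 : Pt3 := (0, 1, 0)
def E3 : Pt3 := (0, 0, 1)

def pd (v : Pt3) (F : Pt3 → ℝ) : Pt3 → ℝ := fun p => fderiv ℝ F p v

lemma top_add_one_le : (((⊤ : ℕ∞) : WithTop ℕ∞) + 1 ≤ ((⊤ : ℕ∞) : WithTop ℕ∞)) := by
  exact_mod_cast (le_top : (⊤ : ℕ∞) + 1 ≤ ⊤)

variable {F G : Pt3 → ℝ} {v w : Pt3}

lemma cdiff (hF : ContDiff ℝ (⊤ : ℕ∞) F) : Differentiable ℝ F := hF.differentiable (by simp)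

lemma contDiff_pd (v : Pt3) (hF : ContDiff ℝ (⊤ : ℕ∞) F) : ContDiff ℝ (⊤ : ℕ∞) (pd v F) :=
  (hF.fderiv_right top_add_one_le).clm_apply contDiff_const

lemma pd_congr (v : Pt3) (h : ∀ p, F p = G p) : pd v F = pd v G := by
  rw [funext h]

lemma pd_add (v : Pt3) (hF : ContDiff ℝ (⊤ : ℕ∞) F) (hG : ContDiff ℝ (⊤ : ℕ∞) G) :
    pd v (fun p => F p + G p) = fun p => pd v F p + pd v G p := by
  funext p
  simp [pd, fderiv_fun_add (cdiff hF p) (cdiff hG p)]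

lemma pd_neg (v : Pt3) : pd v (fun p => -F p) = fun p => -pd v F p := by
  funext p; simp [pd, fderiv_neg]

lemma pd_sub (v : Pt3) (hF : ContDiff ℝ (⊤ : ℕ∞) F) (hG : ContDiff ℝ (⊤ : ℕ∞) G) :
    pd v (fun p => F p - G p) = fun p => pd v F p - pd v G p := by
  funext p
  simp [pd, fderiv_fun_sub (cdiff hF p) (cdiff hG p)]

lemma pd_mul (v : Pt3) (hF : ContDiff ℝ (⊤ : ℕ∞) F) (hG : ContDiff ℝ (⊤ : ℕ∞) G) :
    pd v (fun p => F p * G p) = fun p => F p * pd v G p + G p * pd v F p := by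
  funext p
  simp [pd, fderiv_fun_mul (cdiff hF p) (cdiff hG p)]

lemma pd_cmul (v : Pt3) (c : ℝ) (hF : ContDiff ℝ (⊤ : ℕ∞) F) :
    pd v (fun p => c * F p) = fun p => c * pd v F p := by
  funext p
  simp [pd, fderiv_const_mul (cdiff hF p) c]

lemma pd_sum (v : Pt3) {ι : Type} (s : Finset ι) (A : ι → Pt3 → ℝ)
    (hA : ∀ i, ContDiff ℝ (⊤ : ℕ∞) (A i)) :
    pd v (fun p => ∑ i ∈ s, A i p) = fun p => ∑ i ∈ s, pd v (A i) p := by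
  funext p
  simp [pd, fderiv_fun_sum (fun i _ => cdiff (hA i) p)]

lemma pd_div (v : Pt3) (hF : ContDiff ℝ (⊤ : ℕ∞) F) (hG : ContDiff ℝ (⊤ : ℕ∞) G)
    (hG0 : ∀ p, G p ≠ 0) :
    pd v (fun p => F p / G p) = fun p => (pd v F p * G p - F p * pd v G p) / (G p) ^ 2 := by
  have hH : ContDiff ℝ (⊤ : ℕ∞) (fun p => F p / G p) := hF.div hG hG0
  have key : pd v F = fun p => (F p / G p) * pd v G p + G p * pd v (fun p => F p / G p) p := by
    have h1 : pd v F = pd v (fun p => (F p / G p) * G p) :=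
      pd_congr v (fun p => (div_mul_cancel₀ _ (hG0 p)).symm)
    rw [h1, pd_mul v hH hG]
  funext p
  have h := congrFun key p
  have hG2 : (G p) ^ 2 ≠ 0 := pow_ne_zero _ (hG0 p)
  rw [eq_div_iff hG2, h]
  field_simp [hG0 p]
  ring

lemma pd_comm (hF : ContDiff ℝ (⊤ : ℕ∞) F) (v w : Pt3) : pd v (pd w F) = pd w (pd v F) := by
  have hd : Differentiable ℝ (fderiv ℝ F) := (hF.fderiv_right top_add_one_le).differentiable (by simp)
  have key : ∀ a b : Pt3, ∀ p, pd a (pd b F) p = fderiv ℝ (fderiv ℝ F) p a b := by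
    intro a b p
    have h1 : pd b F = fun q => (ContinuousLinearMap.apply ℝ ℝ b) (fderiv ℝ F q) := rfl
    have h2 : HasFDerivAt (fun q => (ContinuousLinearMap.apply ℝ ℝ b) (fderiv ℝ F q))
        ((ContinuousLinearMap.apply ℝ ℝ b).comp (fderiv ℝ (fderiv ℝ F) p)) p :=
      (ContinuousLinearMap.apply ℝ ℝ b).hasFDerivAt.comp p (hd p).hasFDerivAt
    rw [pd, h1, h2.fderiv]
    rfl
  funext p
  rw [key, key, (hF.contDiffAt.isSymmSndFDerivAt (by rw [minSmoothness_of_isRCLikeNormedField]; exact WithTop.coe_le_coe.2 le_top)) v w]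

lemma px_pd (hF : ContDiff ℝ (⊤ : ℕ∞) F) : px F = pd E1 F := by
  funext p
  have hc : HasDerivAt (fun s : ℝ => ((s, p.2.1, p.2.2) : Pt3)) E1 p.1 :=
    HasDerivAt.prodMk (hasDerivAt_id p.1) (hasDerivAt_const _ _)
  have h := (cdiff hF p).hasFDerivAt.comp_hasDerivAt p.1 hc
  exact h.deriv

lemma py_pd (hF : ContDiff ℝ (⊤ : ℕ∞) F) : py F = pd E2 F := by
  funext p
  have hc : HasDerivAt (fun s : ℝ => ((p.1, s, p.2.2) : Pt3)) E2 p.2.1 :=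
    HasDerivAt.prodMk (hasDerivAt_const _ _) (HasDerivAt.prodMk (hasDerivAt_id _) (hasDerivAt_const _ _))
  have h := (cdiff hF p).hasFDerivAt.comp_hasDerivAt p.2.1 hc
  exact h.deriv

lemma pt_pd (hF : ContDiff ℝ (⊤ : ℕ∞) F) : pt F = pd E3 F := by
  funext p
  have hc : HasDerivAt (fun s : ℝ => ((p.1, p.2.1, s) : Pt3)) E3 p.2.2 :=
    HasDerivAt.prodMk (hasDerivAt_const _ _) (HasDerivAt.prodMk (hasDerivAt_const _ _) (hasDerivAt_id _))
  have h := (cdiff hF p).hasFDerivAt.comp_hasDerivAt p.2.2 hc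
  exact h.deriv

end KPaux

namespace KPaux

variable {F G : Pt3 → ℝ}

-- pointwise versions
lemma pdP_add (v : Pt3) (hF : ContDiff ℝ (⊤ : ℕ∞) F) (hG : ContDiff ℝ (⊤ : ℕ∞) G) (p : Pt3) :
    pd v (fun x => F x + G x) p = pd v F p + pd v G p := congrFun (pd_add v hF hG) p
lemma pdP_sub (v : Pt3) (hF : ContDiff ℝ (⊤ : ℕ∞) F) (hG : ContDiff ℝ (⊤ : ℕ∞) G) (p : Pt3) :
    pd v (fun x => F x - G x) p = pd v F p - pd v G p := congrFun (pd_sub v hF hG) p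
lemma pdP_mul (v : Pt3) (hF : ContDiff ℝ (⊤ : ℕ∞) F) (hG : ContDiff ℝ (⊤ : ℕ∞) G) (p : Pt3) :
    pd v (fun x => F x * G x) p = F p * pd v G p + G p * pd v F p := congrFun (pd_mul v hF hG) p
lemma pdP_cmul (v : Pt3) (c : ℝ) (hF : ContDiff ℝ (⊤ : ℕ∞) F) (p : Pt3) :
    pd v (fun x => c * F x) p = c * pd v F p := congrFun (pd_cmul v c hF) p
lemma pdP_neg (v : Pt3) (p : Pt3) :
    pd v (fun x => -F x) p = -pd v F p := congrFun (pd_neg v) p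
lemma pdP_div (v : Pt3) (hF : ContDiff ℝ (⊤ : ℕ∞) F) (hG : ContDiff ℝ (⊤ : ℕ∞) G) (hG0 : ∀ p, G p ≠ 0) (p : Pt3) :
    pd v (fun x => F x / G x) p = (pd v F p * G p - F p * pd v G p) / (G p) ^ 2 :=
  congrFun (pd_div v hF hG hG0) p
lemma pdP_sum (v : Pt3) {ι : Type} (s : Finset ι) (A : ι → Pt3 → ℝ)
    (hA : ∀ i, ContDiff ℝ (⊤ : ℕ∞) (A i)) (p : Pt3) :
    pd v (fun x => ∑ i ∈ s, A i x) p = ∑ i ∈ s, pd v (A i) p := congrFun (pd_sum v s A hA) p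
lemma pdP_congr (v : Pt3) (h : ∀ p, F p = G p) (p : Pt3) : pd v F p = pd v G p :=
  congrFun (pd_congr v h) p

section Main

variable {N : ℕ} (u f V : Pt3 → ℝ) (q r S : Fin N → Pt3 → ℝ)

/-- σ = f_x / f -/
def sg : Pt3 → ℝ := fun p => pd E1 f p / f p
/-- η with f_y = η f -/
def et : Pt3 → ℝ := fun p => pd E1 (sg f) p + sg f p * sg f p + u p
/-- τ with f_t = τ f -/
def ta : Pt3 → ℝ := fun p =>
  pd E1 (pd E1 (sg f)) p + 3 * sg f p * pd E1 (sg f) p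
    + sg f p * sg f p * sg f p + (3/2) * u p * sg f p
    + (3/4) * (pd E1 u p + V p) + ∑ j, q j p * (S j p / f p)
/-- the transformed u -/
def ut : Pt3 → ℝ := fun p => u p + 2 * pd E1 (sg f) p
/-- the transformed q_j -/
def qt (qj : Pt3 → ℝ) : Pt3 → ℝ := fun p => pd E1 qj p - sg f p * qj p
/-- the transformed r_j -/
def rt (Sj : Pt3 → ℝ) : Pt3 → ℝ := fun p => -(Sj p) / f p

variable (hu : ContDiff ℝ (⊤ : ℕ∞) u) (hf : ContDiff ℝ (⊤ : ℕ∞) f) (hV : ContDiff ℝ (⊤ : ℕ∞) V)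
  (hq : ∀ j, ContDiff ℝ (⊤ : ℕ∞) (q j)) (hr : ∀ j, ContDiff ℝ (⊤ : ℕ∞) (r j))
  (hS : ∀ j, ContDiff ℝ (⊤ : ℕ∞) (S j)) (hf0 : ∀ p, f p ≠ 0)

section CD
include hf hf0

lemma cd_sg : ContDiff ℝ (⊤ : ℕ∞) (sg f) := (contDiff_pd E1 hf).div hf hf0

include hu in
lemma cd_et : ContDiff ℝ (⊤ : ℕ∞) (et u f) :=
  ((contDiff_pd E1 (cd_sg f hf hf0)).add ((cd_sg f hf hf0).mul (cd_sg f hf hf0))).add hu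

include hu hV hq hS in
lemma cd_ta : ContDiff ℝ (⊤ : ℕ∞) (ta u f V q S) := by
  have hsg := cd_sg f hf hf0
  refine ContDiff.add (ContDiff.add (ContDiff.add (ContDiff.add (ContDiff.add ?_ ?_) ?_) ?_) ?_) ?_
  · exact contDiff_pd E1 (contDiff_pd E1 hsg)
  · exact (contDiff_const.mul hsg).mul (contDiff_pd E1 hsg)
  · exact (hsg.mul hsg).mul hsg
  · exact (contDiff_const.mul hu).mul hsg
  · exact contDiff_const.mul ((contDiff_pd E1 hu).add hV)
  · exact ContDiff.sum fun j _ => (hq j).mul ((hS j).div hf hf0)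

include hu in
lemma cd_ut : ContDiff ℝ (⊤ : ℕ∞) (ut u f) :=
  hu.add (contDiff_const.mul (contDiff_pd E1 (cd_sg f hf hf0)))

lemma cd_qt (qj : Pt3 → ℝ) (hqj : ContDiff ℝ (⊤ : ℕ∞) qj) : ContDiff ℝ (⊤ : ℕ∞) (qt f qj) :=
  (contDiff_pd E1 hqj).sub ((cd_sg f hf hf0).mul hqj)

lemma cd_rt (Sj : Pt3 → ℝ) (hSj : ContDiff ℝ (⊤ : ℕ∞) Sj) : ContDiff ℝ (⊤ : ℕ∞) (rt f Sj) :=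
  hSj.neg.div hf hf0

end CD


section Identities

variable (Hfy : ∀ p, pd E2 f p = pd E1 (pd E1 f) p + u p * f p)
  (Hft : ∀ p, pd E3 f p = pd E1 (pd E1 (pd E1 f)) p + (3/2) * u p * pd E1 f p
      + (3/4) * (pd E1 u p + V p) * f p + ∑ j, q j p * S j p)
  (HSx : ∀ j, ∀ p, pd E1 (S j) p = r j p * f p)
  (HSy : ∀ j, ∀ p, pd E2 (S j) p = r j p * pd E1 f p - pd E1 (r j) p * f p)
  (HV : ∀ p, pd E1 V p = pd E2 u p)
  (Hqy : ∀ j, ∀ p, pd E2 (q j) p = pd E1 (pd E1 (q j)) p + u p * q j p)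
  (Hry : ∀ j, ∀ p, pd E2 (r j) p = -(pd E1 (pd E1 (r j)) p) - u p * r j p)

include hf0 in
lemma d1 : ∀ p, pd E1 f p = sg f p * f p := by
  intro p
  unfold sg
  rw [div_mul_cancel₀ _ (hf0 p)]

include hf hf0 in
lemma d11 : ∀ p, pd E1 (pd E1 f) p = (pd E1 (sg f) p + sg f p * sg f p) * f p := by
  intro p
  have h1 : pd E1 (pd E1 f) p = pd E1 (fun x => sg f x * f x) p :=
    pdP_congr E1 (d1 f hf0) p
  have h2 : pd E1 (fun x => sg f x * f x) p
      = sg f p * pd E1 f p + f p * pd E1 (sg f) p := pdP_mul E1 (cd_sg f hf hf0) hf p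
  rw [h1, h2, d1 f hf0 p]
  ring

include hf hf0 Hfy in
lemma d2 : ∀ p, pd E2 f p = et u f p * f p := by
  intro p
  rw [Hfy p, d11 f hf hf0 p]
  unfold et
  ring

include hf hf0 in
lemma d111 : ∀ p, pd E1 (pd E1 (pd E1 f)) p
    = (pd E1 (pd E1 (sg f)) p + 3 * sg f p * pd E1 (sg f) p + sg f p * sg f p * sg f p) * f p := by
  intro p
  have hsg := cd_sg f hf hf0
  have hM : ContDiff ℝ (⊤ : ℕ∞) (fun x => pd E1 (sg f) x + sg f x * sg f x) :=
    (contDiff_pd E1 hsg).add (hsg.mul hsg)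
  have h1 : pd E1 (pd E1 (pd E1 f)) p
      = pd E1 (fun x => (pd E1 (sg f) x + sg f x * sg f x) * f x) p :=
    pdP_congr E1 (d11 f hf hf0) p
  have h2 : pd E1 (fun x => (pd E1 (sg f) x + sg f x * sg f x) * f x) p
      = (pd E1 (sg f) p + sg f p * sg f p) * pd E1 f p
        + f p * pd E1 (fun x => pd E1 (sg f) x + sg f x * sg f x) p := pdP_mul E1 hM hf p
  have h3 : pd E1 (fun x => pd E1 (sg f) x + sg f x * sg f x) p
      = pd E1 (pd E1 (sg f)) p + pd E1 (fun x => sg f x * sg f x) p :=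
    pdP_add E1 (contDiff_pd E1 hsg) (hsg.mul hsg) p
  have h4 : pd E1 (fun x => sg f x * sg f x) p
      = sg f p * pd E1 (sg f) p + sg f p * pd E1 (sg f) p := pdP_mul E1 hsg hsg p
  rw [h1, h2, h3, h4, d1 f hf0 p]
  ring

include hf hf0 Hft in
lemma d3 : ∀ p, pd E3 f p = ta u f V q S p * f p := by
  intro p
  have hsum : ∑ j, q j p * S j p = (∑ j, q j p * (S j p / f p)) * f p := by
    rw [Finset.sum_mul]
    refine Finset.sum_congr rfl fun j _ => ?_
    rw [mul_assoc, div_mul_cancel₀ _ (hf0 p)]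
  rw [Hft p, d111 f hf hf0 p, hsum, d1 f hf0 p]
  unfold ta
  ring

include hu hf hf0 Hfy in
lemma s2 : ∀ p, pd E2 (sg f) p = pd E1 (et u f) p := by
  intro p
  have h1 : pd E2 (sg f) p
      = (pd E2 (pd E1 f) p * f p - pd E1 f p * pd E2 f p) / f p ^ 2 :=
    pdP_div E2 (contDiff_pd E1 hf) hf hf0 p
  have h2 : pd E2 (pd E1 f) p = pd E1 (pd E2 f) p := congrFun (pd_comm hf E2 E1) p
  have h3 : pd E1 (pd E2 f) p = pd E1 (fun x => et u f x * f x) p :=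
    pdP_congr E1 (d2 u f hf hf0 Hfy) p
  have h4 : pd E1 (fun x => et u f x * f x) p
      = et u f p * pd E1 f p + f p * pd E1 (et u f) p :=
    pdP_mul E1 (cd_et u f hu hf hf0) hf p
  rw [h1, h2, h3, h4, d1 f hf0 p, d2 u f hf hf0 Hfy p,
    div_eq_iff (pow_ne_zero 2 (hf0 p))]
  ring

include hu hf hV hq hS hf0 Hft in
lemma s3 : ∀ p, pd E3 (sg f) p = pd E1 (ta u f V q S) p := by
  intro p
  have h1 : pd E3 (sg f) p
      = (pd E3 (pd E1 f) p * f p - pd E1 f p * pd E3 f p) / f p ^ 2 :=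
    pdP_div E3 (contDiff_pd E1 hf) hf hf0 p
  have h2 : pd E3 (pd E1 f) p = pd E1 (pd E3 f) p := congrFun (pd_comm hf E3 E1) p
  have h3 : pd E1 (pd E3 f) p = pd E1 (fun x => ta u f V q S x * f x) p :=
    pdP_congr E1 (d3 u f V q S hf hf0 Hft) p
  have h4 : pd E1 (fun x => ta u f V q S x * f x) p
      = ta u f V q S p * pd E1 f p + f p * pd E1 (ta u f V q S) p :=
    pdP_mul E1 (cd_ta u f V q S hu hf hV hq hS hf0) hf p
  rw [h1, h2, h3, h4, d1 f hf0 p, d3 u f V q S hf hf0 Hft p,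
    div_eq_iff (pow_ne_zero 2 (hf0 p))]
  ring

include hf hS hf0 HSx in
lemma p1 : ∀ j, ∀ p, pd E1 (fun x => S j x / f x) p = r j p - sg f p * (S j p / f p) := by
  intro j p
  have h1 : pd E1 (fun x => S j x / f x) p
      = (pd E1 (S j) p * f p - S j p * pd E1 f p) / f p ^ 2 := pdP_div E1 (hS j) hf hf0 p
  rw [h1, HSx j p, d1 f hf0 p]
  field_simp [hf0 p]

include hu hf hS hf0 HSy Hfy in
lemma p2 : ∀ j, ∀ p, pd E2 (fun x => S j x / f x) p
    = sg f p * r j p - pd E1 (r j) p - et u f p * (S j p / f p) := by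
  intro j p
  have h1 : pd E2 (fun x => S j x / f x) p
      = (pd E2 (S j) p * f p - S j p * pd E2 f p) / f p ^ 2 := pdP_div E2 (hS j) hf hf0 p
  rw [h1, HSy j p, d1 f hf0 p, d2 u f hf hf0 Hfy p]
  field_simp [hf0 p]

include hu hf hf0 in
lemma e1 : ∀ p, pd E1 (et u f) p
    = pd E1 (pd E1 (sg f)) p + 2 * sg f p * pd E1 (sg f) p + pd E1 u p := by
  intro p
  have hsg := cd_sg f hf hf0
  have h1 : pd E1 (et u f) p
      = pd E1 (fun x => pd E1 (sg f) x + sg f x * sg f x) p + pd E1 u p :=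
    pdP_add E1 ((contDiff_pd E1 hsg).add (hsg.mul hsg)) hu p
  have h2 : pd E1 (fun x => pd E1 (sg f) x + sg f x * sg f x) p
      = pd E1 (pd E1 (sg f)) p + pd E1 (fun x => sg f x * sg f x) p :=
    pdP_add E1 (contDiff_pd E1 hsg) (hsg.mul hsg) p
  have h3 : pd E1 (fun x => sg f x * sg f x) p
      = sg f p * pd E1 (sg f) p + sg f p * pd E1 (sg f) p := pdP_mul E1 hsg hsg p
  rw [h1, h2, h3]
  ring


include hu hf hq hf0 Hfy Hqy in
lemma clause2_pd : ∀ j, ∀ p, pd E2 (qt f (q j)) p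
    = pd E1 (pd E1 (qt f (q j))) p + ut u f p * qt f (q j) p := by
  intro j p
  have hsg := cd_sg f hf hf0
  have hqj := hq j
  have b1 : pd E2 (qt f (q j)) p
      = pd E2 (pd E1 (q j)) p - pd E2 (fun x => sg f x * q j x) p :=
    pdP_sub E2 (contDiff_pd E1 hqj) (hsg.mul hqj) p
  have b2 : pd E2 (fun x => sg f x * q j x) p
      = sg f p * pd E2 (q j) p + q j p * pd E2 (sg f) p := pdP_mul E2 hsg hqj p
  have b3 : pd E2 (pd E1 (q j)) p = pd E1 (pd E2 (q j)) p := congrFun (pd_comm hqj E2 E1) p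
  have b4 : pd E1 (pd E2 (q j)) p
      = pd E1 (fun x => pd E1 (pd E1 (q j)) x + u x * q j x) p := pdP_congr E1 (Hqy j) p
  have b5 : pd E1 (fun x => pd E1 (pd E1 (q j)) x + u x * q j x) p
      = pd E1 (pd E1 (pd E1 (q j))) p + pd E1 (fun x => u x * q j x) p :=
    pdP_add E1 (contDiff_pd E1 (contDiff_pd E1 hqj)) (hu.mul hqj) p
  have b6 : pd E1 (fun x => u x * q j x) p = u p * pd E1 (q j) p + q j p * pd E1 u p :=
    pdP_mul E1 hu hqj p
  have b7 := s2 u f hu hf hf0 Hfy p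
  have b8 := e1 u f hu hf hf0 p
  have c1 : ∀ x, pd E1 (qt f (q j)) x
      = pd E1 (pd E1 (q j)) x - (sg f x * pd E1 (q j) x + q j x * pd E1 (sg f) x) := by
    intro x
    have h1 : pd E1 (qt f (q j)) x
        = pd E1 (pd E1 (q j)) x - pd E1 (fun y => sg f y * q j y) x :=
      pdP_sub E1 (contDiff_pd E1 hqj) (hsg.mul hqj) x
    have h2 : pd E1 (fun y => sg f y * q j y) x
        = sg f x * pd E1 (q j) x + q j x * pd E1 (sg f) x := pdP_mul E1 hsg hqj x
    rw [h1, h2]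
  have c2 : pd E1 (pd E1 (qt f (q j))) p
      = pd E1 (fun x => pd E1 (pd E1 (q j)) x
          - (sg f x * pd E1 (q j) x + q j x * pd E1 (sg f) x)) p := pdP_congr E1 c1 p
  have c3 : pd E1 (fun x => pd E1 (pd E1 (q j)) x
          - (sg f x * pd E1 (q j) x + q j x * pd E1 (sg f) x)) p
      = pd E1 (pd E1 (pd E1 (q j))) p
        - pd E1 (fun x => sg f x * pd E1 (q j) x + q j x * pd E1 (sg f) x) p :=
    pdP_sub E1 (contDiff_pd E1 (contDiff_pd E1 hqj))
      ((hsg.mul (contDiff_pd E1 hqj)).add (hqj.mul (contDiff_pd E1 hsg))) p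
  have c4 : pd E1 (fun x => sg f x * pd E1 (q j) x + q j x * pd E1 (sg f) x) p
      = pd E1 (fun x => sg f x * pd E1 (q j) x) p
        + pd E1 (fun x => q j x * pd E1 (sg f) x) p :=
    pdP_add E1 (hsg.mul (contDiff_pd E1 hqj)) (hqj.mul (contDiff_pd E1 hsg)) p
  have c5 : pd E1 (fun x => sg f x * pd E1 (q j) x) p
      = sg f p * pd E1 (pd E1 (q j)) p + pd E1 (q j) p * pd E1 (sg f) p :=
    pdP_mul E1 hsg (contDiff_pd E1 hqj) p
  have c6 : pd E1 (fun x => q j x * pd E1 (sg f) x) p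
      = q j p * pd E1 (pd E1 (sg f)) p + pd E1 (sg f) p * pd E1 (q j) p :=
    pdP_mul E1 hqj (contDiff_pd E1 hsg) p
  rw [b1, b2, b3, b4, b5, b6, Hqy j p, b7, b8, c2, c3, c4, c5, c6]
  unfold ut qt
  ring

include hu hf hr hS hf0 Hfy HSx HSy in
lemma clause3_pd : ∀ j, ∀ p, pd E2 (rt f (S j)) p
    = -(pd E1 (pd E1 (rt f (S j))) p) - ut u f p * rt f (S j) p := by
  intro j p
  have hsg := cd_sg f hf hf0
  have hP : ContDiff ℝ (⊤ : ℕ∞) (fun x => S j x / f x) := (hS j).div hf hf0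
  have hPneg : ∀ x, rt f (S j) x = -(S j x / f x) := fun x => neg_div (f x) (S j x)
  have n1 : pd E2 (rt f (S j)) p = pd E2 (fun x => -(S j x / f x)) p := pdP_congr E2 hPneg p
  have n2 : pd E2 (fun x => -(S j x / f x)) p = -pd E2 (fun x => S j x / f x) p := pdP_neg E2 p
  have m2 : ∀ x, pd E1 (rt f (S j)) x = -(r j x - sg f x * (S j x / f x)) := by
    intro x
    have h1 : pd E1 (rt f (S j)) x = pd E1 (fun y => -(S j y / f y)) x := pdP_congr E1 hPneg x
    have h2 : pd E1 (fun y => -(S j y / f y)) x = -pd E1 (fun y => S j y / f y) x := pdP_neg E1 x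
    rw [h1, h2, p1 f r S hf hS hf0 HSx j x]
  have m3 : pd E1 (pd E1 (rt f (S j))) p
      = pd E1 (fun x => -(r j x - sg f x * (S j x / f x))) p := pdP_congr E1 m2 p
  have m4 : pd E1 (fun x => -(r j x - sg f x * (S j x / f x))) p
      = -pd E1 (fun x => r j x - sg f x * (S j x / f x)) p := pdP_neg E1 p
  have m5 : pd E1 (fun x => r j x - sg f x * (S j x / f x)) p
      = pd E1 (r j) p - pd E1 (fun x => sg f x * (S j x / f x)) p :=
    pdP_sub E1 (hr j) (hsg.mul hP) p
  have m6 : pd E1 (fun x => sg f x * (S j x / f x)) p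
      = sg f p * pd E1 (fun x => S j x / f x) p + (S j p / f p) * pd E1 (sg f) p :=
    pdP_mul E1 hsg hP p
  rw [n1, n2, p2 u f r S hu hf hS hf0 Hfy HSy j p, m3, m4, m5, m6,
    p1 f r S hf hS hf0 HSx j p]
  unfold ut et rt
  ring


/-- the nonlinear expression whose x-derivative appears in KP -/
def Gfun (u' : Pt3 → ℝ) (q' r' : Fin N → Pt3 → ℝ) : Pt3 → ℝ := fun p =>
  4 * pd E3 u' p - 6 * u' p * pd E1 u' p - pd E1 (pd E1 (pd E1 u')) p
    + 8 * pd E1 (fun x => ∑ j, q' j x * r' j x) p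

/-- the first x-antiderivative of the difference of the two KP expressions -/
def Wfun : Pt3 → ℝ := fun p =>
  8 * pd E1 (ta u f V q S) p - 12 * u p * pd E1 (sg f) p
    - 12 * pd E1 (sg f) p * pd E1 (sg f) p - 2 * pd E1 (pd E1 (pd E1 (sg f))) p
    + 8 * ∑ j, (qt f (q j) p * rt f (S j) p - q j p * r j p)

lemma cd_Gfun (u' : Pt3 → ℝ) (q' r' : Fin N → Pt3 → ℝ) (hu' : ContDiff ℝ (⊤ : ℕ∞) u')
    (hq' : ∀ j, ContDiff ℝ (⊤ : ℕ∞) (q' j)) (hr' : ∀ j, ContDiff ℝ (⊤ : ℕ∞) (r' j)) :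
    ContDiff ℝ (⊤ : ℕ∞) (Gfun u' q' r') := by
  refine ContDiff.add (ContDiff.sub (ContDiff.sub ?_ ?_) ?_) ?_
  · exact contDiff_const.mul (contDiff_pd E3 hu')
  · exact (contDiff_const.mul hu').mul (contDiff_pd E1 hu')
  · exact contDiff_pd E1 (contDiff_pd E1 (contDiff_pd E1 hu'))
  · exact contDiff_const.mul (contDiff_pd E1 (ContDiff.sum fun j _ => (hq' j).mul (hr' j)))

include hu hf hV hq hr hS hf0 in
lemma cd_Wfun : ContDiff ℝ (⊤ : ℕ∞) (Wfun u f V q r S) := by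
  have hsg := cd_sg f hf hf0
  refine ContDiff.add (ContDiff.sub (ContDiff.sub (ContDiff.sub ?_ ?_) ?_) ?_) ?_
  · exact contDiff_const.mul (contDiff_pd E1 (cd_ta u f V q S hu hf hV hq hS hf0))
  · exact (contDiff_const.mul hu).mul (contDiff_pd E1 hsg)
  · exact (contDiff_const.mul (contDiff_pd E1 hsg)).mul (contDiff_pd E1 hsg)
  · exact contDiff_const.mul (contDiff_pd E1 (contDiff_pd E1 (contDiff_pd E1 hsg)))
  · refine contDiff_const.mul (ContDiff.sum fun j _ => ContDiff.sub ?_ ((hq j).mul (hr j)))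
    exact (cd_qt f hf hf0 (q j) (hq j)).mul (cd_rt f hf hf0 (S j) (hS j))

include hu hf hV hq hr hS hf0 HSx in
lemma t1 : ∀ p, pd E1 (ta u f V q S) p
    = pd E1 (pd E1 (pd E1 (sg f))) p
      + (3 * sg f p * pd E1 (pd E1 (sg f)) p + pd E1 (sg f) p * (3 * pd E1 (sg f) p))
      + (sg f p * sg f p * pd E1 (sg f) p
          + sg f p * (sg f p * pd E1 (sg f) p + sg f p * pd E1 (sg f) p))
      + ((3/2) * u p * pd E1 (sg f) p + sg f p * ((3/2) * pd E1 u p))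
      + (3/4) * (pd E1 (pd E1 u) p + pd E1 V p)
      + ∑ j, (q j p * (r j p - sg f p * (S j p / f p)) + (S j p / f p) * pd E1 (q j) p) := by
  intro p
  have hsg := cd_sg f hf hf0
  have hT1 : ContDiff ℝ (⊤ : ℕ∞) (fun x => pd E1 (pd E1 (sg f)) x) := contDiff_pd E1 (contDiff_pd E1 hsg)
  have hT2 : ContDiff ℝ (⊤ : ℕ∞) (fun x => 3 * sg f x * pd E1 (sg f) x) :=
    (contDiff_const.mul hsg).mul (contDiff_pd E1 hsg)
  have hT3 : ContDiff ℝ (⊤ : ℕ∞) (fun x => sg f x * sg f x * sg f x) := (hsg.mul hsg).mul hsg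
  have hT4 : ContDiff ℝ (⊤ : ℕ∞) (fun x => (3/2) * u x * sg f x) := (contDiff_const.mul hu).mul hsg
  have hT5 : ContDiff ℝ (⊤ : ℕ∞) (fun x => (3/4) * (pd E1 u x + V x)) :=
    contDiff_const.mul ((contDiff_pd E1 hu).add hV)
  have hT6 : ContDiff ℝ (⊤ : ℕ∞) (fun x => ∑ j, q j x * (S j x / f x)) :=
    ContDiff.sum fun j _ => (hq j).mul ((hS j).div hf hf0)
  have a1 : pd E1 (ta u f V q S) p
      = pd E1 (fun x => pd E1 (pd E1 (sg f)) x + 3 * sg f x * pd E1 (sg f) x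
          + sg f x * sg f x * sg f x + (3/2) * u x * sg f x + (3/4) * (pd E1 u x + V x)) p
        + pd E1 (fun x => ∑ j, q j x * (S j x / f x)) p :=
    pdP_add E1 ((((hT1.add hT2).add hT3).add hT4).add hT5) hT6 p
  have a2 : pd E1 (fun x => pd E1 (pd E1 (sg f)) x + 3 * sg f x * pd E1 (sg f) x
          + sg f x * sg f x * sg f x + (3/2) * u x * sg f x + (3/4) * (pd E1 u x + V x)) p
      = pd E1 (fun x => pd E1 (pd E1 (sg f)) x + 3 * sg f x * pd E1 (sg f) x
          + sg f x * sg f x * sg f x + (3/2) * u x * sg f x) p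
        + pd E1 (fun x => (3/4) * (pd E1 u x + V x)) p :=
    pdP_add E1 (((hT1.add hT2).add hT3).add hT4) hT5 p
  have a3 : pd E1 (fun x => pd E1 (pd E1 (sg f)) x + 3 * sg f x * pd E1 (sg f) x
          + sg f x * sg f x * sg f x + (3/2) * u x * sg f x) p
      = pd E1 (fun x => pd E1 (pd E1 (sg f)) x + 3 * sg f x * pd E1 (sg f) x
          + sg f x * sg f x * sg f x) p + pd E1 (fun x => (3/2) * u x * sg f x) p :=
    pdP_add E1 ((hT1.add hT2).add hT3) hT4 p
  have a4 : pd E1 (fun x => pd E1 (pd E1 (sg f)) x + 3 * sg f x * pd E1 (sg f) x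
          + sg f x * sg f x * sg f x) p
      = pd E1 (fun x => pd E1 (pd E1 (sg f)) x + 3 * sg f x * pd E1 (sg f) x) p
        + pd E1 (fun x => sg f x * sg f x * sg f x) p :=
    pdP_add E1 (hT1.add hT2) hT3 p
  have a5 : pd E1 (fun x => pd E1 (pd E1 (sg f)) x + 3 * sg f x * pd E1 (sg f) x) p
      = pd E1 (pd E1 (pd E1 (sg f))) p + pd E1 (fun x => 3 * sg f x * pd E1 (sg f) x) p :=
    pdP_add E1 hT1 hT2 p
  have a6 : pd E1 (fun x => 3 * sg f x * pd E1 (sg f) x) p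
      = 3 * sg f p * pd E1 (pd E1 (sg f)) p + pd E1 (sg f) p * pd E1 (fun x => 3 * sg f x) p :=
    pdP_mul E1 (contDiff_const.mul hsg) (contDiff_pd E1 hsg) p
  have a7 : pd E1 (fun x => 3 * sg f x) p = 3 * pd E1 (sg f) p := pdP_cmul E1 3 hsg p
  have a8 : pd E1 (fun x => sg f x * sg f x * sg f x) p
      = sg f p * sg f p * pd E1 (sg f) p
        + sg f p * pd E1 (fun x => sg f x * sg f x) p :=
    pdP_mul E1 (hsg.mul hsg) hsg p
  have a9 : pd E1 (fun x => sg f x * sg f x) p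
      = sg f p * pd E1 (sg f) p + sg f p * pd E1 (sg f) p := pdP_mul E1 hsg hsg p
  have a10 : pd E1 (fun x => (3/2) * u x * sg f x) p
      = (3/2) * u p * pd E1 (sg f) p + sg f p * pd E1 (fun x => (3/2) * u x) p :=
    pdP_mul E1 (contDiff_const.mul hu) hsg p
  have a11 : pd E1 (fun x => (3/2) * u x) p = (3/2) * pd E1 u p := pdP_cmul E1 (3/2) hu p
  have a12 : pd E1 (fun x => (3/4) * (pd E1 u x + V x)) p
      = (3/4) * pd E1 (fun x => pd E1 u x + V x) p :=
    pdP_cmul E1 (3/4) ((contDiff_pd E1 hu).add hV) p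
  have a13 : pd E1 (fun x => pd E1 u x + V x) p = pd E1 (pd E1 u) p + pd E1 V p :=
    pdP_add E1 (contDiff_pd E1 hu) hV p
  have a14 : pd E1 (fun x => ∑ j, q j x * (S j x / f x)) p
      = ∑ j, pd E1 (fun x => q j x * (S j x / f x)) p :=
    pdP_sum E1 Finset.univ (fun j => fun x => q j x * (S j x / f x))
      (fun j => (hq j).mul ((hS j).div hf hf0)) p
  have a15 : ∑ j, pd E1 (fun x => q j x * (S j x / f x)) p
      = ∑ j, (q j p * (r j p - sg f p * (S j p / f p)) + (S j p / f p) * pd E1 (q j) p) := by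
    refine Finset.sum_congr rfl fun j _ => ?_
    rw [pdP_mul E1 (G := fun x => S j x / f x) (hq j) ((hS j).div hf hf0) p, p1 f r S hf hS hf0 HSx j p]
  rw [a1, a2, a3, a4, a5, a6, a7, a8, a9, a10, a11, a12, a13, a14, a15]

include hu hf hf0 Hfy in
lemma e2x : ∀ p, pd E2 (et u f) p
    = (pd E1 (pd E1 (pd E1 (sg f))) p
        + (2 * sg f p * pd E1 (pd E1 (sg f)) p + pd E1 (sg f) p * (2 * pd E1 (sg f) p))
        + pd E1 (pd E1 u) p)
      + (sg f p * (pd E1 (pd E1 (sg f)) p + 2 * sg f p * pd E1 (sg f) p + pd E1 u p)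
          + sg f p * (pd E1 (pd E1 (sg f)) p + 2 * sg f p * pd E1 (sg f) p + pd E1 u p))
      + pd E2 u p := by
  intro p
  have hsg := cd_sg f hf hf0
  have cdet := cd_et u f hu hf hf0
  have k1 : pd E2 (et u f) p
      = pd E2 (fun x => pd E1 (sg f) x + sg f x * sg f x) p + pd E2 u p :=
    pdP_add E2 ((contDiff_pd E1 hsg).add (hsg.mul hsg)) hu p
  have k2 : pd E2 (fun x => pd E1 (sg f) x + sg f x * sg f x) p
      = pd E2 (pd E1 (sg f)) p + pd E2 (fun x => sg f x * sg f x) p :=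
    pdP_add E2 (contDiff_pd E1 hsg) (hsg.mul hsg) p
  have k3 : pd E2 (fun x => sg f x * sg f x) p
      = sg f p * pd E2 (sg f) p + sg f p * pd E2 (sg f) p := pdP_mul E2 hsg hsg p
  have k4 : pd E2 (pd E1 (sg f)) p = pd E1 (pd E2 (sg f)) p := congrFun (pd_comm hsg E2 E1) p
  have k5 : pd E1 (pd E2 (sg f)) p = pd E1 (pd E1 (et u f)) p :=
    pdP_congr E1 (s2 u f hu hf hf0 Hfy) p
  have k6 : pd E1 (pd E1 (et u f)) p
      = pd E1 (fun x => pd E1 (pd E1 (sg f)) x + 2 * sg f x * pd E1 (sg f) x + pd E1 u x) p :=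
    pdP_congr E1 (e1 u f hu hf hf0) p
  have k7 : pd E1 (fun x => pd E1 (pd E1 (sg f)) x + 2 * sg f x * pd E1 (sg f) x + pd E1 u x) p
      = pd E1 (fun x => pd E1 (pd E1 (sg f)) x + 2 * sg f x * pd E1 (sg f) x) p
        + pd E1 (pd E1 u) p :=
    pdP_add E1 ((contDiff_pd E1 (contDiff_pd E1 hsg)).add
      ((contDiff_const.mul hsg).mul (contDiff_pd E1 hsg))) (contDiff_pd E1 hu) p
  have k8 : pd E1 (fun x => pd E1 (pd E1 (sg f)) x + 2 * sg f x * pd E1 (sg f) x) p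
      = pd E1 (pd E1 (pd E1 (sg f))) p + pd E1 (fun x => 2 * sg f x * pd E1 (sg f) x) p :=
    pdP_add E1 (contDiff_pd E1 (contDiff_pd E1 hsg))
      ((contDiff_const.mul hsg).mul (contDiff_pd E1 hsg)) p
  have k9 : pd E1 (fun x => 2 * sg f x * pd E1 (sg f) x) p
      = 2 * sg f p * pd E1 (pd E1 (sg f)) p + pd E1 (sg f) p * pd E1 (fun x => 2 * sg f x) p :=
    pdP_mul E1 (contDiff_const.mul hsg) (contDiff_pd E1 hsg) p
  have k10 : pd E1 (fun x => 2 * sg f x) p = 2 * pd E1 (sg f) p := pdP_cmul E1 2 hsg p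
  have k11 : pd E2 (sg f) p = pd E1 (et u f) p := s2 u f hu hf hf0 Hfy p
  have k12 : pd E1 (et u f) p
      = pd E1 (pd E1 (sg f)) p + 2 * sg f p * pd E1 (sg f) p + pd E1 u p :=
    e1 u f hu hf hf0 p
  rw [k1, k2, k3, k4, k5, k6, k7, k8, k9, k10, k11, k12]

include hf0 in
lemma hzero : ∀ p,
    (∑ j, (q j p * (r j p - sg f p * (S j p / f p)) + (S j p / f p) * pd E1 (q j) p))
      + (∑ j, (qt f (q j) p * rt f (S j) p - q j p * r j p)) = 0 := by
  intro p
  rw [← Finset.sum_add_distrib]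
  refine Finset.sum_eq_zero fun j _ => ?_
  unfold qt rt
  field_simp
  ring

include hu hf hV hq hr hS hf0 HV HSx Hfy in
lemma Weq : ∀ p, Wfun u f V q r S p = 6 * pd E2 (et u f) p := by
  intro p
  unfold Wfun
  rw [t1 u f V q r S hu hf hV hq hr hS hf0 HSx p, HV p,
    e2x u f hu hf hf0 Hfy p]
  linear_combination (8:ℝ) * hzero f q r S hf0 p


include hu hf hV hq hr hS hf0 Hft in
lemma Geq : ∀ p, Gfun (ut u f) (fun j => qt f (q j)) (fun j => rt f (S j)) p
    = Gfun u q r p + pd E1 (Wfun u f V q r S) p := by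
  intro p
  have hsg := cd_sg f hf hf0
  have hqt : ∀ j, ContDiff ℝ (⊤ : ℕ∞) (qt f (q j)) := fun j => cd_qt f hf hf0 (q j) (hq j)
  have hrt : ∀ j, ContDiff ℝ (⊤ : ℕ∞) (rt f (S j)) := fun j => cd_rt f hf hf0 (S j) (hS j)
  have g1 : pd E3 (ut u f) p = pd E3 u p + 2 * pd E1 (pd E1 (ta u f V q S)) p := by
    have h1 : pd E3 (ut u f) p = pd E3 u p + pd E3 (fun x => 2 * pd E1 (sg f) x) p :=
      pdP_add E3 hu (contDiff_const.mul (contDiff_pd E1 hsg)) p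
    have h2 : pd E3 (fun x => 2 * pd E1 (sg f) x) p = 2 * pd E3 (pd E1 (sg f)) p :=
      pdP_cmul E3 2 (contDiff_pd E1 hsg) p
    have h3 : pd E3 (pd E1 (sg f)) p = pd E1 (pd E3 (sg f)) p :=
      congrFun (pd_comm hsg E3 E1) p
    have h4 : pd E1 (pd E3 (sg f)) p = pd E1 (pd E1 (ta u f V q S)) p :=
      pdP_congr E1 (s3 u f V q S hu hf hV hq hS hf0 Hft) p
    rw [h1, h2, h3, h4]
  have g2 : ∀ x, pd E1 (ut u f) x = pd E1 u x + 2 * pd E1 (pd E1 (sg f)) x := by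
    intro x
    have h1 : pd E1 (ut u f) x = pd E1 u x + pd E1 (fun y => 2 * pd E1 (sg f) y) x :=
      pdP_add E1 hu (contDiff_const.mul (contDiff_pd E1 hsg)) x
    have h2 : pd E1 (fun y => 2 * pd E1 (sg f) y) x = 2 * pd E1 (pd E1 (sg f)) x :=
      pdP_cmul E1 2 (contDiff_pd E1 hsg) x
    rw [h1, h2]
  have g3 : ∀ x, pd E1 (pd E1 (ut u f)) x
      = pd E1 (pd E1 u) x + 2 * pd E1 (pd E1 (pd E1 (sg f))) x := by
    intro x
    have h1 : pd E1 (pd E1 (ut u f)) x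
        = pd E1 (fun y => pd E1 u y + 2 * pd E1 (pd E1 (sg f)) y) x := pdP_congr E1 g2 x
    have h2 : pd E1 (fun y => pd E1 u y + 2 * pd E1 (pd E1 (sg f)) y) x
        = pd E1 (pd E1 u) x + pd E1 (fun y => 2 * pd E1 (pd E1 (sg f)) y) x :=
      pdP_add E1 (contDiff_pd E1 hu)
        (contDiff_const.mul (contDiff_pd E1 (contDiff_pd E1 hsg))) x
    have h3 : pd E1 (fun y => 2 * pd E1 (pd E1 (sg f)) y) x
        = 2 * pd E1 (pd E1 (pd E1 (sg f))) x :=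
      pdP_cmul E1 2 (contDiff_pd E1 (contDiff_pd E1 hsg)) x
    rw [h1, h2, h3]
  have g4 : pd E1 (pd E1 (pd E1 (ut u f))) p
      = pd E1 (pd E1 (pd E1 u)) p + 2 * pd E1 (pd E1 (pd E1 (pd E1 (sg f)))) p := by
    have h1 : pd E1 (pd E1 (pd E1 (ut u f))) p
        = pd E1 (fun y => pd E1 (pd E1 u) y + 2 * pd E1 (pd E1 (pd E1 (sg f))) y) p :=
      pdP_congr E1 g3 p
    have h2 : pd E1 (fun y => pd E1 (pd E1 u) y + 2 * pd E1 (pd E1 (pd E1 (sg f))) y) p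
        = pd E1 (pd E1 (pd E1 u)) p
          + pd E1 (fun y => 2 * pd E1 (pd E1 (pd E1 (sg f))) y) p :=
      pdP_add E1 (contDiff_pd E1 (contDiff_pd E1 hu))
        (contDiff_const.mul (contDiff_pd E1 (contDiff_pd E1 (contDiff_pd E1 hsg)))) p
    have h3 : pd E1 (fun y => 2 * pd E1 (pd E1 (pd E1 (sg f))) y) p
        = 2 * pd E1 (pd E1 (pd E1 (pd E1 (sg f)))) p :=
      pdP_cmul E1 2 (contDiff_pd E1 (contDiff_pd E1 (contDiff_pd E1 hsg))) p
    rw [h1, h2, h3]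
  have g5 : pd E1 (fun x => ∑ j, qt f (q j) x * rt f (S j) x) p
      = ∑ j, (qt f (q j) p * pd E1 (rt f (S j)) p + rt f (S j) p * pd E1 (qt f (q j)) p) := by
    have h1 := pdP_sum E1 Finset.univ (fun j => fun x => qt f (q j) x * rt f (S j) x)
      (fun j => (hqt j).mul (hrt j)) p
    rw [h1]
    exact Finset.sum_congr rfl fun j _ => pdP_mul E1 (hqt j) (hrt j) p
  have g6 : pd E1 (fun x => ∑ j, q j x * r j x) p
      = ∑ j, (q j p * pd E1 (r j) p + r j p * pd E1 (q j) p) := by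
    have h1 := pdP_sum E1 Finset.univ (fun j => fun x => q j x * r j x)
      (fun j => (hq j).mul (hr j)) p
    rw [h1]
    exact Finset.sum_congr rfl fun j _ => pdP_mul E1 (hq j) (hr j) p
  -- expansion of pd E1 Wfun
  have hWa : ContDiff ℝ (⊤ : ℕ∞) (fun x => 8 * pd E1 (ta u f V q S) x) :=
    contDiff_const.mul (contDiff_pd E1 (cd_ta u f V q S hu hf hV hq hS hf0))
  have hWb : ContDiff ℝ (⊤ : ℕ∞) (fun x => 12 * u x * pd E1 (sg f) x) :=
    (contDiff_const.mul hu).mul (contDiff_pd E1 hsg)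
  have hWc : ContDiff ℝ (⊤ : ℕ∞) (fun x => 12 * pd E1 (sg f) x * pd E1 (sg f) x) :=
    (contDiff_const.mul (contDiff_pd E1 hsg)).mul (contDiff_pd E1 hsg)
  have hWd : ContDiff ℝ (⊤ : ℕ∞) (fun x => 2 * pd E1 (pd E1 (pd E1 (sg f))) x) :=
    contDiff_const.mul (contDiff_pd E1 (contDiff_pd E1 (contDiff_pd E1 hsg)))
  have hWsum : ContDiff ℝ (⊤ : ℕ∞) (fun x => ∑ j, (qt f (q j) x * rt f (S j) x - q j x * r j x)) :=
    ContDiff.sum fun j _ => ((hqt j).mul (hrt j)).sub ((hq j).mul (hr j))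
  have w1 : pd E1 (Wfun u f V q r S) p
      = pd E1 (fun x => 8 * pd E1 (ta u f V q S) x - 12 * u x * pd E1 (sg f) x
          - 12 * pd E1 (sg f) x * pd E1 (sg f) x - 2 * pd E1 (pd E1 (pd E1 (sg f))) x) p
        + pd E1 (fun x => 8 * ∑ j, (qt f (q j) x * rt f (S j) x - q j x * r j x)) p :=
    pdP_add E1 (((hWa.sub hWb).sub hWc).sub hWd) (contDiff_const.mul hWsum) p
  have w2 : pd E1 (fun x => 8 * pd E1 (ta u f V q S) x - 12 * u x * pd E1 (sg f) x
          - 12 * pd E1 (sg f) x * pd E1 (sg f) x - 2 * pd E1 (pd E1 (pd E1 (sg f))) x) p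
      = pd E1 (fun x => 8 * pd E1 (ta u f V q S) x - 12 * u x * pd E1 (sg f) x
          - 12 * pd E1 (sg f) x * pd E1 (sg f) x) p
        - pd E1 (fun x => 2 * pd E1 (pd E1 (pd E1 (sg f))) x) p :=
    pdP_sub E1 ((hWa.sub hWb).sub hWc) hWd p
  have w3 : pd E1 (fun x => 8 * pd E1 (ta u f V q S) x - 12 * u x * pd E1 (sg f) x
          - 12 * pd E1 (sg f) x * pd E1 (sg f) x) p
      = pd E1 (fun x => 8 * pd E1 (ta u f V q S) x - 12 * u x * pd E1 (sg f) x) p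
        - pd E1 (fun x => 12 * pd E1 (sg f) x * pd E1 (sg f) x) p :=
    pdP_sub E1 (hWa.sub hWb) hWc p
  have w4 : pd E1 (fun x => 8 * pd E1 (ta u f V q S) x - 12 * u x * pd E1 (sg f) x) p
      = pd E1 (fun x => 8 * pd E1 (ta u f V q S) x) p
        - pd E1 (fun x => 12 * u x * pd E1 (sg f) x) p :=
    pdP_sub E1 hWa hWb p
  have w5 : pd E1 (fun x => 8 * pd E1 (ta u f V q S) x) p
      = 8 * pd E1 (pd E1 (ta u f V q S)) p :=
    pdP_cmul E1 8 (contDiff_pd E1 (cd_ta u f V q S hu hf hV hq hS hf0)) p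
  have w6 : pd E1 (fun x => 12 * u x * pd E1 (sg f) x) p
      = 12 * u p * pd E1 (pd E1 (sg f)) p + pd E1 (sg f) p * pd E1 (fun x => 12 * u x) p :=
    pdP_mul E1 (contDiff_const.mul hu) (contDiff_pd E1 hsg) p
  have w6b : pd E1 (fun x => 12 * u x) p = 12 * pd E1 u p := pdP_cmul E1 12 hu p
  have w7 : pd E1 (fun x => 12 * pd E1 (sg f) x * pd E1 (sg f) x) p
      = 12 * pd E1 (sg f) p * pd E1 (pd E1 (sg f)) p
        + pd E1 (sg f) p * pd E1 (fun x => 12 * pd E1 (sg f) x) p :=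
    pdP_mul E1 (contDiff_const.mul (contDiff_pd E1 hsg)) (contDiff_pd E1 hsg) p
  have w7b : pd E1 (fun x => 12 * pd E1 (sg f) x) p = 12 * pd E1 (pd E1 (sg f)) p :=
    pdP_cmul E1 12 (contDiff_pd E1 hsg) p
  have w8 : pd E1 (fun x => 2 * pd E1 (pd E1 (pd E1 (sg f))) x) p
      = 2 * pd E1 (pd E1 (pd E1 (pd E1 (sg f)))) p :=
    pdP_cmul E1 2 (contDiff_pd E1 (contDiff_pd E1 (contDiff_pd E1 hsg))) p
  have w9 : pd E1 (fun x => 8 * ∑ j, (qt f (q j) x * rt f (S j) x - q j x * r j x)) p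
      = 8 * pd E1 (fun x => ∑ j, (qt f (q j) x * rt f (S j) x - q j x * r j x)) p :=
    pdP_cmul E1 8 hWsum p
  have w10 : pd E1 (fun x => ∑ j, (qt f (q j) x * rt f (S j) x - q j x * r j x)) p
      = ∑ j, pd E1 (fun x => qt f (q j) x * rt f (S j) x - q j x * r j x) p :=
    pdP_sum E1 Finset.univ (fun j => fun x => qt f (q j) x * rt f (S j) x - q j x * r j x)
      (fun j => ((hqt j).mul (hrt j)).sub ((hq j).mul (hr j))) p
  have w11 : ∑ j, pd E1 (fun x => qt f (q j) x * rt f (S j) x - q j x * r j x) p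
      = ∑ j, ((qt f (q j) p * pd E1 (rt f (S j)) p + rt f (S j) p * pd E1 (qt f (q j)) p)
          - (q j p * pd E1 (r j) p + r j p * pd E1 (q j) p)) := by
    refine Finset.sum_congr rfl fun j _ => ?_
    rw [pdP_sub E1 ((hqt j).mul (hrt j)) ((hq j).mul (hr j)) p,
      pdP_mul E1 (hqt j) (hrt j) p, pdP_mul E1 (hq j) (hr j) p]
  show 4 * pd E3 (ut u f) p - 6 * ut u f p * pd E1 (ut u f) p
      - pd E1 (pd E1 (pd E1 (ut u f))) p
      + 8 * pd E1 (fun x => ∑ j, qt f (q j) x * rt f (S j) x) p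
    = Gfun u q r p + pd E1 (Wfun u f V q r S) p
  rw [g1, g2 p, g4, g5, w1, w2, w3, w4, w5, w6, w6b, w7, w7b, w8, w9, w10, w11,
    Finset.sum_sub_distrib]
  unfold Gfun
  rw [g6]
  unfold ut
  ring

include hu hf hV hq hr hS hf0 Hfy Hft HV HSx in
lemma clause1_pd (HKP : ∀ p, pd E1 (Gfun u q r) p - 3 * pd E2 (pd E2 u) p = 0) :
    ∀ p, pd E1 (Gfun (ut u f) (fun j => qt f (q j)) (fun j => rt f (S j))) p
      - 3 * pd E2 (pd E2 (ut u f)) p = 0 := by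
  intro p
  have hsg := cd_sg f hf hf0
  have cdet := cd_et u f hu hf hf0
  have cdW := cd_Wfun u f V q r S hu hf hV hq hr hS hf0
  have z1 : pd E1 (Gfun (ut u f) (fun j => qt f (q j)) (fun j => rt f (S j))) p
      = pd E1 (fun x => Gfun u q r x + pd E1 (Wfun u f V q r S) x) p :=
    pdP_congr E1 (Geq u f V q r S hu hf hV hq hr hS hf0 Hft) p
  have z2 : pd E1 (fun x => Gfun u q r x + pd E1 (Wfun u f V q r S) x) p
      = pd E1 (Gfun u q r) p + pd E1 (pd E1 (Wfun u f V q r S)) p :=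
    pdP_add E1 (cd_Gfun u q r hu hq hr) (contDiff_pd E1 cdW) p
  have z3 : pd E1 (Wfun u f V q r S) = pd E1 (fun x => 6 * pd E2 (et u f) x) :=
    pd_congr E1 (Weq u f V q r S hu hf hV hq hr hS hf0 Hfy HSx HV)
  have z5 : pd E1 (fun x => 6 * pd E2 (et u f) x)
      = fun x => 6 * pd E1 (pd E2 (et u f)) x := pd_cmul E1 6 (contDiff_pd E2 cdet)
  have z4 : pd E1 (pd E1 (Wfun u f V q r S)) p
      = pd E1 (fun x => 6 * pd E1 (pd E2 (et u f)) x) p := by rw [z3, z5]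
  have z7 : pd E1 (fun x => 6 * pd E1 (pd E2 (et u f)) x) p
      = 6 * pd E1 (pd E1 (pd E2 (et u f))) p :=
    pdP_cmul E1 6 (contDiff_pd E1 (contDiff_pd E2 cdet)) p
  have y1 : ∀ x, pd E2 (ut u f) x = pd E2 u x + 2 * pd E1 (pd E1 (et u f)) x := by
    intro x
    have h1 : pd E2 (ut u f) x = pd E2 u x + pd E2 (fun y => 2 * pd E1 (sg f) y) x :=
      pdP_add E2 hu (contDiff_const.mul (contDiff_pd E1 hsg)) x
    have h2 : pd E2 (fun y => 2 * pd E1 (sg f) y) x = 2 * pd E2 (pd E1 (sg f)) x :=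
      pdP_cmul E2 2 (contDiff_pd E1 hsg) x
    have h3 : pd E2 (pd E1 (sg f)) x = pd E1 (pd E2 (sg f)) x :=
      congrFun (pd_comm hsg E2 E1) x
    have h4 : pd E1 (pd E2 (sg f)) x = pd E1 (pd E1 (et u f)) x :=
      pdP_congr E1 (s2 u f hu hf hf0 Hfy) x
    rw [h1, h2, h3, h4]
  have y2 : pd E2 (pd E2 (ut u f)) p
      = pd E2 (fun x => pd E2 u x + 2 * pd E1 (pd E1 (et u f)) x) p := pdP_congr E2 y1 p
  have y3 : pd E2 (fun x => pd E2 u x + 2 * pd E1 (pd E1 (et u f)) x) p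
      = pd E2 (pd E2 u) p + pd E2 (fun x => 2 * pd E1 (pd E1 (et u f)) x) p :=
    pdP_add E2 (contDiff_pd E2 hu)
      (contDiff_const.mul (contDiff_pd E1 (contDiff_pd E1 cdet))) p
  have y3b : pd E2 (fun x => 2 * pd E1 (pd E1 (et u f)) x) p
      = 2 * pd E2 (pd E1 (pd E1 (et u f))) p :=
    pdP_cmul E2 2 (contDiff_pd E1 (contDiff_pd E1 cdet)) p
  have y4 : pd E2 (pd E1 (pd E1 (et u f))) = pd E1 (pd E2 (pd E1 (et u f))) :=
    pd_comm (contDiff_pd E1 cdet) E2 E1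
  have y5 : pd E2 (pd E1 (et u f)) = pd E1 (pd E2 (et u f)) := pd_comm cdet E2 E1
  have y6 : pd E1 (pd E2 (pd E1 (et u f))) = pd E1 (pd E1 (pd E2 (et u f))) := by rw [y5]
  rw [z1, z2, z4, z7, y2, y3, y3b, y4, y6]
  have := HKP p
  linarith

end Identities

end Main

end KPaux


open KPaux

theorem kpescs_autoBacklund_T1 (N : ℕ) (u f V : Pt3 → ℝ) (q r S : Fin N → Pt3 → ℝ)
    (hu : ContDiff ℝ (⊤ : ℕ∞) u) (hq : ∀ j, ContDiff ℝ (⊤ : ℕ∞) (q j)) (hr : ∀ j, ContDiff ℝ (⊤ : ℕ∞) (r j))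
    (hf : ContDiff ℝ (⊤ : ℕ∞) f) (hV : ContDiff ℝ (⊤ : ℕ∞) V) (hS : ∀ j, ContDiff ℝ (⊤ : ℕ∞) (S j))
    (hsol : SolvesKPESCS N u q r)
    (hdat : KPEigenDatum N u q r f V S)
    (hf0 : ∀ p : Pt3, f p ≠ 0) :
    SolvesKPESCS N
      (fun p => u p + 2 * px (fun p' => px f p' / f p') p)
      (fun j => fun p => f p * px (fun p' => q j p' / f p') p)
      (fun j => fun p => -(S j p) / f p) := by
  obtain ⟨hKP, hqy, hry⟩ := hsol
  obtain ⟨hVx, hSx, hSy, hfy, hft⟩ := hdat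
  have hsg : ContDiff ℝ (⊤ : ℕ∞) (sg f) := cd_sg f hf hf0
  -- convert hypotheses to pd form
  have Hfy : ∀ p, pd E2 f p = pd E1 (pd E1 f) p + u p * f p := by
    intro p
    have h := hfy p
    rwa [px_pd hf, px_pd (contDiff_pd E1 hf), py_pd hf] at h
  have Hft : ∀ p, pd E3 f p = pd E1 (pd E1 (pd E1 f)) p + (3/2) * u p * pd E1 f p
      + (3/4) * (pd E1 u p + V p) * f p + ∑ j, q j p * S j p := by
    intro p
    have h := hft p
    rwa [px_pd hf, px_pd (contDiff_pd E1 hf), px_pd (contDiff_pd E1 (contDiff_pd E1 hf)),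
      px_pd hu, pt_pd hf] at h
  have HSx : ∀ j, ∀ p, pd E1 (S j) p = r j p * f p := by
    intro j p
    have h := hSx j p
    rwa [px_pd (hS j)] at h
  have HSy : ∀ j, ∀ p, pd E2 (S j) p = r j p * pd E1 f p - pd E1 (r j) p * f p := by
    intro j p
    have h := hSy j p
    rwa [py_pd (hS j), px_pd hf, px_pd (hr j)] at h
  have HV : ∀ p, pd E1 V p = pd E2 u p := by
    intro p
    have h := hVx p
    rwa [px_pd hV, py_pd hu] at h
  have Hqy : ∀ j, ∀ p, pd E2 (q j) p = pd E1 (pd E1 (q j)) p + u p * q j p := by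
    intro j p
    have h := hqy j p
    rwa [py_pd (hq j), px_pd (hq j), px_pd (contDiff_pd E1 (hq j))] at h
  have Hry : ∀ j, ∀ p, pd E2 (r j) p = -(pd E1 (pd E1 (r j)) p) - u p * r j p := by
    intro j p
    have h := hry j p
    rwa [py_pd (hr j), px_pd (hr j), px_pd (contDiff_pd E1 (hr j))] at h
  have HKP : ∀ p, pd E1 (Gfun u q r) p - 3 * pd E2 (pd E2 u) p = 0 := by
    intro p
    have h := hKP p
    have hlam : (fun p' => 4 * pt u p' - 6 * u p' * px u p' - px (px (px u)) p'
        + 8 * px (fun p'' => ∑ j, q j p'' * r j p'') p') = Gfun u q r := by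
      funext x
      rw [pt_pd hu, px_pd hu, px_pd (contDiff_pd E1 hu),
        px_pd (contDiff_pd E1 (contDiff_pd E1 hu)),
        px_pd (ContDiff.sum fun j _ => (hq j).mul (hr j))]
      rfl
    rwa [hlam, px_pd (cd_Gfun u q r hu hq hr), py_pd hu, py_pd (contDiff_pd E2 hu)] at h
  -- convert the goal functions
  have hqt : ∀ j, ContDiff ℝ (⊤ : ℕ∞) (qt f (q j)) := fun j => cd_qt f hf hf0 (q j) (hq j)
  have hrt : ∀ j, ContDiff ℝ (⊤ : ℕ∞) (rt f (S j)) := fun j => cd_rt f hf hf0 (S j) (hS j)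
  have cdut : ContDiff ℝ (⊤ : ℕ∞) (ut u f) := cd_ut u f hu hf hf0
  have hugoal : (fun p => u p + 2 * px (fun p' => px f p' / f p') p) = ut u f := by
    have h1 : (fun p' => px f p' / f p') = sg f := by
      funext x
      rw [px_pd hf]
      rfl
    funext p
    rw [h1, px_pd hsg]
    rfl
  have hqgoal : (fun j => fun p => f p * px (fun p' => q j p' / f p') p)
      = fun j => qt f (q j) := by
    funext j p
    rw [px_pd (F := fun p' => q j p' / f p') ((hq j).div hf hf0), pdP_div E1 (hq j) hf hf0 p]
    unfold qt sg
    field_simp [hf0 p]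
  have hrgoal : (fun j => fun p => -(S j p) / f p) = fun j => rt f (S j) := rfl
  rw [hugoal, hqgoal, hrgoal]
  refine ⟨?_, ?_, ?_⟩
  · -- the KP equation for the transformed data
    intro p
    show px (fun p' => 4 * pt (ut u f) p' - 6 * ut u f p' * px (ut u f) p'
        - px (px (px (ut u f))) p'
        + 8 * px (fun p'' => ∑ j, qt f (q j) p'' * rt f (S j) p'') p') p
      - 3 * py (py (ut u f)) p = 0
    have hlam : (fun p' => 4 * pt (ut u f) p' - 6 * ut u f p' * px (ut u f) p'
        - px (px (px (ut u f))) p'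
        + 8 * px (fun p'' => ∑ j, qt f (q j) p'' * rt f (S j) p'') p')
        = Gfun (ut u f) (fun j => qt f (q j)) (fun j => rt f (S j)) := by
      funext x
      rw [pt_pd cdut, px_pd cdut, px_pd (contDiff_pd E1 cdut),
        px_pd (contDiff_pd E1 (contDiff_pd E1 cdut)),
        px_pd (ContDiff.sum fun j _ => (hqt j).mul (hrt j))]
      rfl
    rw [hlam, px_pd (cd_Gfun _ _ _ cdut hqt hrt), py_pd cdut, py_pd (contDiff_pd E2 cdut)]
    exact clause1_pd u f V q r S hu hf hV hq hr hS hf0 Hfy Hft HSx HV HKP p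
  · -- the q equations
    intro j p
    show py (qt f (q j)) p = px (px (qt f (q j))) p + ut u f p * qt f (q j) p
    rw [px_pd (hqt j), px_pd (contDiff_pd E1 (hqt j)), py_pd (hqt j)]
    exact clause2_pd u f q hu hf hq hf0 Hfy Hqy j p
  · -- the r equations
    intro j p
    show py (rt f (S j)) p = -(px (px (rt f (S j))) p) - ut u f p * rt f (S j) p
    rw [px_pd (hrt j), px_pd (contDiff_pd E1 (hrt j)), py_pd (hrt j)]
    exact clause3_pd u f r S hu hf hr hS hf0 Hfy HSx HSy j p
end
end

section
/- Let (u, q_1,…,q_N, r_1,…,r_N) solve the KPESCS, let (f, V, S_1,…,S_N) be an eigenfunction datum and (g, V, R_1,…,R_N) an adjoint eigenfunction datum for this solution (with the same V), and let Ω be a smooth function with Ω_x = f·g, Ω_y = f_x·g − f·g_x, Ω_t = f_{xx}·g − f_x·g_x + f·g_{xx} + (3/2)u·f·g + Σ_{j=1}^N R_j·S_j, and Ω nowhere vanishing. Then the tuple (û, q̂_1,…,q̂_N, r̂_1,…,r̂_N) defined by û := u + 2(Ω_x/Ω)_x, q̂_j := q_j − f·R_j/Ω, and r̂_j := r_j −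 g·S_j/Ω again solves the KPESCS. (This is the binary auto-Bäcklund transformation T[f,g] = T_2∘T_1 of the KP hierarchy with self-consistent sources, in the case k=2, n=3.) -/
noncomputable section

open Finset

namespace KP

variable {F G : Pt3 → ℝ}

@[fun_prop]
theorem contDiff_sum' {N : ℕ} (H : Fin N → Pt3 → ℝ) (h : ∀ j, ContDiff ℝ (⊤ : ℕ∞) (H j)) :
    ContDiff ℝ (⊤ : ℕ∞) (fun p => ∑ j, H j p) := ContDiff.sum (fun i _ => h i)

lemma diffX (hF : ContDiff ℝ (⊤ : ℕ∞) F) (a b x : ℝ) :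
    DifferentiableAt ℝ (fun s => F (s, a, b)) x := by
  have : ContDiff ℝ (⊤ : ℕ∞) (fun s : ℝ => F (s, a, b)) :=
    hF.comp (contDiff_id.prodMk contDiff_const)
  exact this.differentiable (by simp) x

lemma diffY (hF : ContDiff ℝ (⊤ : ℕ∞) F) (a b x : ℝ) :
    DifferentiableAt ℝ (fun s => F (a, s, b)) x := by
  have : ContDiff ℝ (⊤ : ℕ∞) (fun s : ℝ => F (a, s, b)) :=
    hF.comp (contDiff_const.prodMk (contDiff_id.prodMk contDiff_const))
  exact this.differentiable (by simp) x

lemma diffT (hF : ContDiff ℝ (⊤ : ℕ∞) F) (a b x : ℝ) :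
    DifferentiableAt ℝ (fun s => F (a, b, s)) x := by
  have : ContDiff ℝ (⊤ : ℕ∞) (fun s : ℝ => F (a, b, s)) :=
    hF.comp (contDiff_const.prodMk (contDiff_const.prodMk contDiff_id))
  exact this.differentiable (by simp) x

lemma px_eq_fderiv (hF : ContDiff ℝ (⊤ : ℕ∞) F) (p : Pt3) :
    px F p = fderiv ℝ F p (1,0,0) :=
  ((hF.differentiable (by simp) p).hasFDerivAt.comp_hasDerivAt p.1
    ((hasDerivAt_id p.1).prodMk (hasDerivAt_const p.1 (p.2.1, p.2.2)))).deriv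

lemma py_eq_fderiv (hF : ContDiff ℝ (⊤ : ℕ∞) F) (p : Pt3) :
    py F p = fderiv ℝ F p (0,1,0) :=
  ((hF.differentiable (by simp) p).hasFDerivAt.comp_hasDerivAt p.2.1
    ((hasDerivAt_const p.2.1 p.1).prodMk ((hasDerivAt_id p.2.1).prodMk (hasDerivAt_const _ p.2.2)))).deriv

lemma pt_eq_fderiv (hF : ContDiff ℝ (⊤ : ℕ∞) F) (p : Pt3) :
    pt F p = fderiv ℝ F p (0,0,1) :=
  ((hF.differentiable (by simp) p).hasFDerivAt.comp_hasDerivAt p.2.2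
    ((hasDerivAt_const _ p.1).prodMk ((hasDerivAt_const _ p.2.1).prodMk (hasDerivAt_id p.2.2)))).deriv

@[fun_prop]
lemma contDiff_px (hF : ContDiff ℝ (⊤ : ℕ∞) F) : ContDiff ℝ (⊤ : ℕ∞) (px F) := by
  have h : px F = fun p => fderiv ℝ F p (1,0,0) := funext (px_eq_fderiv hF)
  rw [h]; exact (hF.fderiv_right (by simp)).clm_apply contDiff_const

@[fun_prop]
lemma contDiff_py (hF : ContDiff ℝ (⊤ : ℕ∞) F) : ContDiff ℝ (⊤ : ℕ∞) (py F) := by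
  have h : py F = fun p => fderiv ℝ F p (0,1,0) := funext (py_eq_fderiv hF)
  rw [h]; exact (hF.fderiv_right (by simp)).clm_apply contDiff_const

@[fun_prop]
lemma contDiff_pt (hF : ContDiff ℝ (⊤ : ℕ∞) F) : ContDiff ℝ (⊤ : ℕ∞) (pt F) := by
  have h : pt F = fun p => fderiv ℝ F p (0,0,1) := funext (pt_eq_fderiv hF)
  rw [h]; exact (hF.fderiv_right (by simp)).clm_apply contDiff_const

lemma fderiv_dir_comm (hF : ContDiff ℝ (⊤ : ℕ∞) F) (p : Pt3) (v w : Pt3) :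
    fderiv ℝ (fun q => fderiv ℝ F q v) p w = fderiv ℝ (fun q => fderiv ℝ F q w) p v := by
  have hd : DifferentiableAt ℝ (fderiv ℝ F) p :=
    ((hF.fderiv_right (m := (⊤ : ℕ∞)) (by simp)).differentiable (by simp)) p
  have h1 : fderiv ℝ (fun q => fderiv ℝ F q v) p w = fderiv ℝ (fderiv ℝ F) p w v := by
    rw [fderiv_clm_apply hd (differentiableAt_const v)]; simp
  have h2 : fderiv ℝ (fun q => fderiv ℝ F q w) p v = fderiv ℝ (fderiv ℝ F) p v w := by
    rw [fderiv_clm_apply hd (differentiableAt_const w)]; simp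
  rw [h1, h2]
  exact (hF.contDiffAt.isSymmSndFDerivAt (by rw [minSmoothness_of_isRCLikeNormedField]; exact WithTop.coe_le_coe.mpr le_top)) w v

lemma px_py_comm (hF : ContDiff ℝ (⊤ : ℕ∞) F) (p : Pt3) : px (py F) p = py (px F) p := by
  have h1 : py F = fun q => fderiv ℝ F q (0,1,0) := funext (py_eq_fderiv hF)
  have h2 : px F = fun q => fderiv ℝ F q (1,0,0) := funext (px_eq_fderiv hF)
  rw [h1, h2, px_eq_fderiv ((hF.fderiv_right (by simp)).clm_apply contDiff_const),
    py_eq_fderiv ((hF.fderiv_right (by simp)).clm_apply contDiff_const)]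
  exact (fderiv_dir_comm hF p _ _).symm

lemma px_pt_comm (hF : ContDiff ℝ (⊤ : ℕ∞) F) (p : Pt3) : px (pt F) p = pt (px F) p := by
  have h1 : pt F = fun q => fderiv ℝ F q (0,0,1) := funext (pt_eq_fderiv hF)
  have h2 : px F = fun q => fderiv ℝ F q (1,0,0) := funext (px_eq_fderiv hF)
  rw [h1, h2, px_eq_fderiv ((hF.fderiv_right (by simp)).clm_apply contDiff_const),
    pt_eq_fderiv ((hF.fderiv_right (by simp)).clm_apply contDiff_const)]
  exact (fderiv_dir_comm hF p _ _).symm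

/-! ### structural derivative rules (function level) -/

lemma px_add (hF : ContDiff ℝ (⊤ : ℕ∞) F) (hG : ContDiff ℝ (⊤ : ℕ∞) G) :
    px (fun p => F p + G p) = fun p => px F p + px G p :=
  funext fun p => deriv_add (diffX hF _ _ _) (diffX hG _ _ _)

lemma px_sub (hF : ContDiff ℝ (⊤ : ℕ∞) F) (hG : ContDiff ℝ (⊤ : ℕ∞) G) :
    px (fun p => F p - G p) = fun p => px F p - px G p :=
  funext fun p => deriv_sub (diffX hF _ _ _) (diffX hG _ _ _)

lemma px_mul (hF : ContDiff ℝ (⊤ : ℕ∞) F) (hG : ContDiff ℝ (⊤ : ℕ∞) G) :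
    px (fun p => F p * G p) = fun p => px F p * G p + F p * px G p :=
  funext fun p => deriv_mul (diffX hF _ _ _) (diffX hG _ _ _)

lemma px_cmul (c : ℝ) (hF : ContDiff ℝ (⊤ : ℕ∞) F) :
    px (fun p => c * F p) = fun p => c * px F p :=
  funext fun p => deriv_const_mul c (diffX hF _ _ _)

lemma px_neg : px (fun p => -F p) = fun p => -px F p :=
  funext fun p => deriv.neg

lemma px_const (c : ℝ) : px (fun _ => c) = fun _ => (0:ℝ) :=
  funext fun p => deriv_const _ c

lemma px_inv (hF : ContDiff ℝ (⊤ : ℕ∞) F) (h0 : ∀ p, F p ≠ 0) :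
    px (fun p => (F p)⁻¹) = fun p => -(px F p * ((F p)⁻¹ * (F p)⁻¹)) := by
  funext p
  show deriv (fun s => (F (s, p.2.1, p.2.2))⁻¹) p.1 = _
  rw [deriv_fun_inv'' (diffX hF _ _ _) (h0 _)]
  have hder : deriv (fun s => F (s, p.2.1, p.2.2)) p.1 = px F p := rfl
  rw [hder]
  ring

lemma px_sum {N : ℕ} {H : Fin N → Pt3 → ℝ}
    (hH : ∀ j, ContDiff ℝ (⊤ : ℕ∞) (H j)) :
    px (fun p => ∑ j, H j p) = fun p => ∑ j, px (H j) p :=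
  funext fun p => deriv_fun_sum (fun j _ => diffX (hH j) _ _ _)

lemma py_add (hF : ContDiff ℝ (⊤ : ℕ∞) F) (hG : ContDiff ℝ (⊤ : ℕ∞) G) :
    py (fun p => F p + G p) = fun p => py F p + py G p :=
  funext fun p => deriv_add (diffY hF _ _ _) (diffY hG _ _ _)

lemma py_sub (hF : ContDiff ℝ (⊤ : ℕ∞) F) (hG : ContDiff ℝ (⊤ : ℕ∞) G) :
    py (fun p => F p - G p) = fun p => py F p - py G p :=
  funext fun p => deriv_sub (diffY hF _ _ _) (diffY hG _ _ _)

lemma py_mul (hF : ContDiff ℝ (⊤ : ℕ∞) F) (hG : ContDiff ℝ (⊤ : ℕ∞) G) :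
    py (fun p => F p * G p) = fun p => py F p * G p + F p * py G p :=
  funext fun p => deriv_mul (diffY hF _ _ _) (diffY hG _ _ _)

lemma py_cmul (c : ℝ) (hF : ContDiff ℝ (⊤ : ℕ∞) F) :
    py (fun p => c * F p) = fun p => c * py F p :=
  funext fun p => deriv_const_mul c (diffY hF _ _ _)

lemma py_neg : py (fun p => -F p) = fun p => -py F p :=
  funext fun p => deriv.neg

lemma py_const (c : ℝ) : py (fun _ => c) = fun _ => (0:ℝ) :=
  funext fun p => deriv_const _ c

lemma py_inv (hF : ContDiff ℝ (⊤ : ℕ∞) F) (h0 : ∀ p, F p ≠ 0) :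
    py (fun p => (F p)⁻¹) = fun p => -(py F p * ((F p)⁻¹ * (F p)⁻¹)) := by
  funext p
  show deriv (fun s => (F (p.1, s, p.2.2))⁻¹) p.2.1 = _
  rw [deriv_fun_inv'' (diffY hF _ _ _) (h0 _)]
  have hder : deriv (fun s => F (p.1, s, p.2.2)) p.2.1 = py F p := rfl
  rw [hder]
  ring

lemma pt_add (hF : ContDiff ℝ (⊤ : ℕ∞) F) (hG : ContDiff ℝ (⊤ : ℕ∞) G) :
    pt (fun p => F p + G p) = fun p => pt F p + pt G p :=
  funext fun p => deriv_add (diffT hF _ _ _) (diffT hG _ _ _)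

lemma pt_sub (hF : ContDiff ℝ (⊤ : ℕ∞) F) (hG : ContDiff ℝ (⊤ : ℕ∞) G) :
    pt (fun p => F p - G p) = fun p => pt F p - pt G p :=
  funext fun p => deriv_sub (diffT hF _ _ _) (diffT hG _ _ _)

lemma pt_mul (hF : ContDiff ℝ (⊤ : ℕ∞) F) (hG : ContDiff ℝ (⊤ : ℕ∞) G) :
    pt (fun p => F p * G p) = fun p => pt F p * G p + F p * pt G p :=
  funext fun p => deriv_mul (diffT hF _ _ _) (diffT hG _ _ _)

lemma pt_cmul (c : ℝ) (hF : ContDiff ℝ (⊤ : ℕ∞) F) :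
    pt (fun p => c * F p) = fun p => c * pt F p :=
  funext fun p => deriv_const_mul c (diffT hF _ _ _)

lemma pt_neg : pt (fun p => -F p) = fun p => -pt F p :=
  funext fun p => deriv.neg

lemma pt_const (c : ℝ) : pt (fun _ => c) = fun _ => (0:ℝ) :=
  funext fun p => deriv_const _ c

lemma pt_inv (hF : ContDiff ℝ (⊤ : ℕ∞) F) (h0 : ∀ p, F p ≠ 0) :
    pt (fun p => (F p)⁻¹) = fun p => -(pt F p * ((F p)⁻¹ * (F p)⁻¹)) := by
  funext p
  show deriv (fun s => (F (p.1, p.2.1, s))⁻¹) p.2.2 = _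
  rw [deriv_fun_inv'' (diffT hF _ _ _) (h0 _)]
  have hder : deriv (fun s => F (p.1, p.2.1, s)) p.2.2 = pt F p := rfl
  rw [hder]
  ring

end KP

/-- An adjoint eigenfunction datum `(g, V, R₁, …, R_N)` for a solution of the KPESCS. -/
def KPAdjointDatum (N : ℕ) (u : Pt3 → ℝ) (q r : Fin N → Pt3 → ℝ)
    (g V : Pt3 → ℝ) (R : Fin N → Pt3 → ℝ) : Prop :=
  (∀ p : Pt3, px V p = py u p) ∧
  (∀ j, ∀ p : Pt3, px (R j) p = q j p * g p) ∧
  (∀ j, ∀ p : Pt3, py (R j) p = px (q j) p * g p - q j p * px g p) ∧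
  (∀ p : Pt3, py g p = -(px (px g) p) - u p * g p) ∧
  (∀ p : Pt3, pt g p = px (px (px g)) p + (3/2) * u p * px g p
      + (3/4) * (px u p - V p) * g p + ∑ j, r j p * R j p)

set_option maxHeartbeats 4000000 in
theorem kpescs_autoBacklund_binary (N : ℕ) (u f g V Ω : Pt3 → ℝ)
    (q r S R : Fin N → Pt3 → ℝ)
    (hu : ContDiff ℝ (⊤ : ℕ∞) u) (hq : ∀ j, ContDiff ℝ (⊤ : ℕ∞) (q j)) (hr : ∀ j, ContDiff ℝ (⊤ : ℕ∞) (r j))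
    (hf : ContDiff ℝ (⊤ : ℕ∞) f) (hg : ContDiff ℝ (⊤ : ℕ∞) g) (hV : ContDiff ℝ (⊤ : ℕ∞) V)
    (hS : ∀ j, ContDiff ℝ (⊤ : ℕ∞) (S j)) (hR : ∀ j, ContDiff ℝ (⊤ : ℕ∞) (R j))
    (hΩ : ContDiff ℝ (⊤ : ℕ∞) Ω)
    (hsol : SolvesKPESCS N u q r)
    (hdatf : KPEigenDatum N u q r f V S)
    (hdatg : KPAdjointDatum N u q r g V R)
    (hΩx : ∀ p : Pt3, px Ω p = f p * g p)
    (hΩy : ∀ p : Pt3, py Ω p = px f p * g p - f p * px g p)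
    (hΩt : ∀ p : Pt3, pt Ω p = px (px f) p * g p - px f p * px g p + f p * px (px g) p
        + (3/2) * u p * f p * g p + ∑ j, R j p * S j p)
    (hΩ0 : ∀ p : Pt3, Ω p ≠ 0) :
    SolvesKPESCS N
      (fun p => u p + 2 * px (fun p' => px Ω p' / Ω p') p)
      (fun j => fun p => q j p - f p * R j p / Ω p)
      (fun j => fun p => r j p - g p * S j p / Ω p) := by
  obtain ⟨hKP, hqy, hry⟩ := hsol
  obtain ⟨hVx, hSx, hSy, hfy, hft⟩ := hdatf
  obtain ⟨hVx', hRx, hRy, hgy, hgt⟩ := hdatg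
  have hOi : ContDiff ℝ (⊤ : ℕ∞) (fun p => (Ω p)⁻¹) := hΩ.inv hΩ0
  -- function-level hypothesis rules
  have hΩxF : px Ω = fun p => f p * g p := funext hΩx
  have hΩyF : py Ω = fun p => px f p * g p - f p * px g p := funext hΩy
  have hΩtF : pt Ω = fun p => px (px f) p * g p - px f p * px g p + f p * px (px g) p
      + (3/2) * u p * f p * g p + ∑ j, R j p * S j p := funext hΩt
  have hfyF : py f = fun p => px (px f) p + u p * f p := funext hfy
  have hgyF : py g = fun p => -(px (px g) p) - u p * g p := funext hgy
  have hftF : pt f = fun p => px (px (px f)) p + (3/2) * u p * px f p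
      + (3/4) * (px u p + V p) * f p + ∑ j, q j p * S j p := funext hft
  have hgtF : pt g = fun p => px (px (px g)) p + (3/2) * u p * px g p
      + (3/4) * (px u p - V p) * g p + ∑ j, r j p * R j p := funext hgt
  have hqyF : ∀ j, py (q j) = fun p => px (px (q j)) p + u p * q j p :=
    fun j => funext (hqy j)
  have hryF : ∀ j, py (r j) = fun p => -(px (px (r j)) p) - u p * r j p :=
    fun j => funext (hry j)
  have hSxF : ∀ j, px (S j) = fun p => r j p * f p := fun j => funext (hSx j)
  have hSyF : ∀ j, py (S j) = fun p => r j p * px f p - px (r j) p * f p :=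
    fun j => funext (hSy j)
  have hRxF : ∀ j, px (R j) = fun p => q j p * g p := fun j => funext (hRx j)
  have hRyF : ∀ j, py (R j) = fun p => px (q j) p * g p - q j p * px g p :=
    fun j => funext (hRy j)
  have hVxF : px V = fun p => py u p := funext hVx
  refine ⟨?_, ?_, ?_⟩
  · -- the KP equation itself
    -- canonical sum rules
    have sA : px (fun p => ∑ j, q j p * r j p)
        = fun p => (∑ j, px (q j) p * r j p) + ∑ j, q j p * px (r j) p := by
      simp (disch := first | assumption | (intro _; fun_prop) | fun_prop) only
        [KP.px_sum, KP.px_mul]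
      funext p
      simp only [Finset.mul_sum, ← Finset.sum_add_distrib]
    have sA10 : px (fun p => ∑ j, px (q j) p * r j p)
        = fun p => (∑ j, px (px (q j)) p * r j p) + ∑ j, px (q j) p * px (r j) p := by
      simp (disch := first | assumption | (intro _; fun_prop) | fun_prop) only
        [KP.px_sum, KP.px_mul]
      funext p
      simp only [Finset.mul_sum, ← Finset.sum_add_distrib]
    have sA01 : px (fun p => ∑ j, q j p * px (r j) p)
        = fun p => (∑ j, px (q j) p * px (r j) p) + ∑ j, q j p * px (px (r j)) p := by
      simp (disch := first | assumption | (intro _; fun_prop) | fun_prop) only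
        [KP.px_sum, KP.px_mul]
      funext p
      simp only [Finset.mul_sum, ← Finset.sum_add_distrib]
    have sB : px (fun p => ∑ j, q j p * S j p)
        = fun p => (∑ j, px (q j) p * S j p) + f p * ∑ j, q j p * r j p := by
      simp (disch := first | assumption | (intro _; fun_prop) | fun_prop) only
        [KP.px_sum, KP.px_mul, hSxF]
      funext p
      simp only [Finset.mul_sum, ← Finset.sum_add_distrib]
      exact Finset.sum_congr rfl fun j _ => by ring
    have sB10 : px (fun p => ∑ j, px (q j) p * S j p)
        = fun p => (∑ j, px (px (q j)) p * S j p) + f p * ∑ j, px (q j) p * r j p := by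
      simp (disch := first | assumption | (intro _; fun_prop) | fun_prop) only
        [KP.px_sum, KP.px_mul, hSxF]
      funext p
      simp only [Finset.mul_sum, ← Finset.sum_add_distrib]
      exact Finset.sum_congr rfl fun j _ => by ring
    have sC : px (fun p => ∑ j, r j p * R j p)
        = fun p => (∑ j, px (r j) p * R j p) + g p * ∑ j, q j p * r j p := by
      simp (disch := first | assumption | (intro _; fun_prop) | fun_prop) only
        [KP.px_sum, KP.px_mul, hRxF]
      funext p
      simp only [Finset.mul_sum, ← Finset.sum_add_distrib]
      exact Finset.sum_congr rfl fun j _ => by ring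
    have sC10 : px (fun p => ∑ j, px (r j) p * R j p)
        = fun p => (∑ j, px (px (r j)) p * R j p) + g p * ∑ j, q j p * px (r j) p := by
      simp (disch := first | assumption | (intro _; fun_prop) | fun_prop) only
        [KP.px_sum, KP.px_mul, hRxF]
      funext p
      simp only [Finset.mul_sum, ← Finset.sum_add_distrib]
      exact Finset.sum_congr rfl fun j _ => by ring
    have sD : px (fun p => ∑ j, R j p * S j p)
        = fun p => g p * (∑ j, q j p * S j p) + f p * ∑ j, r j p * R j p := by
      simp (disch := first | assumption | (intro _; fun_prop) | fun_prop) only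
        [KP.px_sum, KP.px_mul, hSxF, hRxF]
      funext p
      simp only [Finset.mul_sum, ← Finset.sum_add_distrib]
      exact Finset.sum_congr rfl fun j _ => by ring
    have hsplit : (fun p => ∑ j, (q j p - f p * R j p * (Ω p)⁻¹) * (r j p - g p * S j p * (Ω p)⁻¹))
        = fun p => (∑ j, q j p * r j p) - g p * (Ω p)⁻¹ * (∑ j, q j p * S j p)
            - f p * (Ω p)⁻¹ * (∑ j, r j p * R j p)
            + f p * g p * ((Ω p)⁻¹ * (Ω p)⁻¹) * (∑ j, R j p * S j p) := by
      funext p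
      simp only [Finset.mul_sum, ← Finset.sum_sub_distrib, ← Finset.sum_add_distrib]
      exact Finset.sum_congr rfl fun j _ => by ring
    -- commuted atom rules
    have huy1 : py (px u) = fun p => px (py u) p :=
      funext fun p => (KP.px_py_comm hu p).symm
    have hfy1 : py (px f) = fun p => px (px (px f)) p + px u p * f p + u p * px f p := by
      funext p
      rw [← KP.px_py_comm hf p, hfyF]
      simp (disch := first | assumption | (intro _; fun_prop) | fun_prop) only
        [KP.px_add, KP.px_mul]
      ring
    have hfy2 : py (px (px f)) = fun p => px (px (px (px f))) p + px (px u) p * f p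
        + 2 * px u p * px f p + u p * px (px f) p := by
      funext p
      rw [← KP.px_py_comm (KP.contDiff_px hf) p, hfy1]
      simp (disch := first | assumption | (intro _; fun_prop) | fun_prop) only
        [KP.px_add, KP.px_mul]
      ring
    have hfy3 : py (px (px (px f))) = fun p => px (px (px (px (px f)))) p
        + px (px (px u)) p * f p + 3 * px (px u) p * px f p
        + 3 * px u p * px (px f) p + u p * px (px (px f)) p := by
      funext p
      rw [← KP.px_py_comm (KP.contDiff_px (KP.contDiff_px hf)) p, hfy2]
      simp (disch := first | assumption | (intro _; fun_prop) | fun_prop) only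
        [KP.px_add, KP.px_mul, KP.px_cmul, KP.px_const]
      ring
    have hgy1 : py (px g) = fun p => -(px (px (px g)) p) - px u p * g p - u p * px g p := by
      funext p
      rw [← KP.px_py_comm hg p, hgyF]
      simp (disch := first | assumption | (intro _; fun_prop) | fun_prop) only
        [KP.px_add, KP.px_sub, KP.px_mul, KP.px_neg]
      ring
    have hgy2 : py (px (px g)) = fun p => -(px (px (px (px g))) p) - px (px u) p * g p
        - 2 * px u p * px g p - u p * px (px g) p := by
      funext p
      rw [← KP.px_py_comm (KP.contDiff_px hg) p, hgy1]
      simp (disch := first | assumption | (intro _; fun_prop) | fun_prop) only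
        [KP.px_add, KP.px_sub, KP.px_mul, KP.px_neg, KP.px_cmul, KP.px_const]
      ring
    have hgy3 : py (px (px (px g))) = fun p => -(px (px (px (px (px g)))) p)
        - px (px (px u)) p * g p - 3 * px (px u) p * px g p
        - 3 * px u p * px (px g) p - u p * px (px (px g)) p := by
      funext p
      rw [← KP.px_py_comm (KP.contDiff_px (KP.contDiff_px hg)) p, hgy2]
      simp (disch := first | assumption | (intro _; fun_prop) | fun_prop) only
        [KP.px_add, KP.px_sub, KP.px_mul, KP.px_neg, KP.px_cmul, KP.px_const]
      ring
    have hty1 : pt (px f) = fun p => px (px (px (px f))) p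
        + 3/2 * (px u p * px f p + u p * px (px f) p)
        + 3/4 * ((px (px u) p + py u p) * f p + (px u p + V p) * px f p)
        + ((∑ j, px (q j) p * S j p) + f p * ∑ j, q j p * r j p) := by
      funext p
      rw [← KP.px_pt_comm hf p, hftF]
      simp (disch := first | assumption | (intro _; fun_prop) | fun_prop) only
        [KP.px_add, KP.px_sub, KP.px_mul, KP.px_cmul, KP.px_const, hVxF, hSxF, sB]
      ring
    have htg1 : pt (px g) = fun p => px (px (px (px g))) p
        + 3/2 * (px u p * px g p + u p * px (px g) p)
        + 3/4 * ((px (px u) p - py u p) * g p + (px u p - V p) * px g p)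
        + ((∑ j, px (r j) p * R j p) + g p * ∑ j, q j p * r j p) := by
      funext p
      rw [← KP.px_pt_comm hg p, hgtF]
      simp (disch := first | assumption | (intro _; fun_prop) | fun_prop) only
        [KP.px_add, KP.px_sub, KP.px_mul, KP.px_cmul, KP.px_const, hVxF, hRxF, sC]
      ring
    intro p
    have h := hKP p
    simp (disch := first | assumption | (intro _; fun_prop) | fun_prop) only
      [div_eq_mul_inv,
       KP.px_add, KP.px_sub, KP.px_mul, KP.px_cmul, KP.px_neg, KP.px_const, KP.px_inv,
       KP.py_add, KP.py_sub, KP.py_mul, KP.py_cmul, KP.py_neg, KP.py_const, KP.py_inv,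
       KP.pt_add, KP.pt_sub, KP.pt_mul, KP.pt_cmul, KP.pt_neg, KP.pt_const, KP.pt_inv,
       hΩxF, hΩyF, hΩtF, hfyF, hgyF, hftF, hgtF, hVxF, hSxF, hRxF,
       hsplit, sA, sA10, sA01, sB, sB10, sC, sC10, sD,
       huy1, hfy1, hfy2, hfy3, hgy1, hgy2, hgy3, hty1, htg1] at h ⊢
    linear_combination h
  · -- q̂ heat equation
    intro j p
    have hqj := hq j; have hrj := hr j; have hSj := hS j; have hRj := hR j
    simp (disch := first | assumption | (intro _; fun_prop) | fun_prop) only [div_eq_mul_inv, KP.px_add, KP.px_sub, KP.px_mul, KP.px_cmul, KP.px_neg,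
      KP.px_const, KP.px_inv, KP.py_add, KP.py_sub, KP.py_mul, KP.py_cmul, KP.py_neg,
      KP.py_const, KP.py_inv, hΩxF, hΩyF, hfyF, hgyF, hqyF, hryF, hSxF, hSyF, hRxF, hRyF]
    ring
  · -- r̂ heat equation
    intro j p
    have hqj := hq j; have hrj := hr j; have hSj := hS j; have hRj := hR j
    simp (disch := first | assumption | (intro _; fun_prop) | fun_prop) only [div_eq_mul_inv, KP.px_add, KP.px_sub, KP.px_mul, KP.px_cmul, KP.px_neg,
      KP.px_const, KP.px_inv, KP.py_add, KP.py_sub, KP.py_mul, KP.py_cmul, KP.py_neg,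
      KP.py_const, KP.py_inv, hΩxF, hΩyF, hfyF, hgyF, hqyF, hryF, hSxF, hSyF, hRxF, hRyF]
    ring
end
end

section
/- Let (u, q_1,…,q_N, r_1,…,r_N) solve the KPESCS and let (f, V, S_1,…,S_N) be an eigenfunction datum for this solution with f nowhere vanishing. Then the tuple (ṽ, q̃_1,…,q̃_N, r̃_1,…,r̃_N) defined by ṽ := f_x/f, q̃_j := q_j/f, and r̃_j := −S_j solves the mKPESCS with potential Ṽ := f_y/f. (This is the Bäcklund transformation M_1[f] from the KP hierarchy with self-consistent sources to the mKP hierarchy with self-consistent sources of Theorem 7.1, in the case k=2, n=3.) -/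
noncomputable section

open Finset

set_option maxHeartbeats 2000000

/-- The mKP equation with self-consistent sources (mKPESCS), with potential `V`
satisfying `V_x = v_y`. -/
def SolvesMKPESCS (N : ℕ) (v V : Pt3 → ℝ) (q r : Fin N → Pt3 → ℝ) : Prop :=
  (∀ p : Pt3, px V p = py v p) ∧
  (∀ p : Pt3, 4 * pt v p - px (px (px v)) p - 3 * py V p - 6 * V p * px v p
      + 6 * (v p)^2 * px v p + 4 * px (fun p' => ∑ j, q j p' * r j p') p = 0) ∧
  (∀ j, ∀ p : Pt3, py (q j) p = px (px (q j)) p + 2 * v p * px (q j) p) ∧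
  (∀ j, ∀ p : Pt3, py (r j) p = -(px (px (r j)) p) + 2 * v p * px (r j) p)


namespace KPtoMKPaux

abbrev ee1 : Pt3 := (1,0,0)
abbrev ee2 : Pt3 := (0,1,0)
abbrev ee3 : Pt3 := (0,0,1)

/-- directional derivative -/
def D (w : Pt3) (F : Pt3 → ℝ) : Pt3 → ℝ := fun p => fderiv ℝ F p w

@[fun_prop]
lemma contDiff_D (w : Pt3) {F : Pt3 → ℝ} (hF : ContDiff ℝ (⊤ : ℕ∞) F) : ContDiff ℝ (⊤ : ℕ∞) (D w F) :=
  (ContinuousLinearMap.apply ℝ ℝ w).contDiff.comp (hF.fderiv_right (by simp))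

@[fun_prop]
lemma differentiable_D (w : Pt3) {F : Pt3 → ℝ} (hF : ContDiff ℝ (⊤ : ℕ∞) F) :
    Differentiable ℝ (D w F) := (contDiff_D w hF).differentiable (by simp)

lemma D_comm {F : Pt3 → ℝ} (hF : ContDiff ℝ (⊤ : ℕ∞) F) (v w : Pt3) :
    D v (D w F) = D w (D v F) := by
  funext p
  have hdf : Differentiable ℝ (fderiv ℝ F) :=
    (hF.fderiv_right (m := (⊤ : ℕ∞)) (by simp)).differentiable (by simp)
  have key : ∀ a b : Pt3, D a (D b F) p = fderiv ℝ (fderiv ℝ F) p a b := by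
    intro a b
    have h1 : HasFDerivAt (fun q => fderiv ℝ F q b)
        ((ContinuousLinearMap.apply ℝ ℝ b).comp (fderiv ℝ (fderiv ℝ F) p)) p :=
      (ContinuousLinearMap.apply ℝ ℝ b).hasFDerivAt.comp p (hdf p).hasFDerivAt
    have hDb : D b F = fun q => fderiv ℝ F q b := rfl
    simp only [D, hDb]
    rw [h1.fderiv]
    rfl
  rw [key, key, (hF.contDiffAt.isSymmSndFDerivAt (by rw [minSmoothness_of_isRCLikeNormedField]; exact WithTop.coe_le_coe.mpr (le_top : (2 : ℕ∞) ≤ ⊤))) v w]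

lemma px_eq {F : Pt3 → ℝ} (hF : Differentiable ℝ F) : px F = D ee1 F := by
  funext p
  have hL : HasDerivAt (fun s : ℝ => ((s, p.2.1, p.2.2) : Pt3)) ((1:ℝ),(0:ℝ),(0:ℝ)) p.1 :=
    HasDerivAt.prodMk (hasDerivAt_id p.1) (hasDerivAt_const p.1 (p.2.1, p.2.2))
  exact ((hF p).hasFDerivAt.comp_hasDerivAt p.1 hL).deriv

lemma py_eq {F : Pt3 → ℝ} (hF : Differentiable ℝ F) : py F = D ee2 F := by
  funext p
  have hL : HasDerivAt (fun s : ℝ => ((p.1, s, p.2.2) : Pt3)) ((0:ℝ),(1:ℝ),(0:ℝ)) p.2.1 :=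
    HasDerivAt.prodMk (hasDerivAt_const p.2.1 p.1) (HasDerivAt.prodMk (hasDerivAt_id p.2.1) (hasDerivAt_const p.2.1 p.2.2))
  exact ((hF p).hasFDerivAt.comp_hasDerivAt p.2.1 hL).deriv

lemma pt_eq {F : Pt3 → ℝ} (hF : Differentiable ℝ F) : pt F = D ee3 F := by
  funext p
  have hL : HasDerivAt (fun s : ℝ => ((p.1, p.2.1, s) : Pt3)) ((0:ℝ),(0:ℝ),(1:ℝ)) p.2.2 :=
    HasDerivAt.prodMk (hasDerivAt_const p.2.2 p.1) (HasDerivAt.prodMk (hasDerivAt_const p.2.2 p.2.1) (hasDerivAt_id p.2.2))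
  exact ((hF p).hasFDerivAt.comp_hasDerivAt p.2.2 hL).deriv

lemma D_mul {F G : Pt3 → ℝ} (w : Pt3) (hF : ContDiff ℝ (⊤ : ℕ∞) F) (hG : ContDiff ℝ (⊤ : ℕ∞) G) :
    D w (fun p => F p * G p) = fun p => D w F p * G p + F p * D w G p := by
  funext p
  simp only [D, fderiv_fun_mul ((hF.differentiable (by simp)) p) ((hG.differentiable (by simp)) p)]
  simp only [ContinuousLinearMap.add_apply, ContinuousLinearMap.smul_apply, smul_eq_mul]
  ring

lemma D_add {F G : Pt3 → ℝ} (w : Pt3) (hF : ContDiff ℝ (⊤ : ℕ∞) F) (hG : ContDiff ℝ (⊤ : ℕ∞) G) :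
    D w (fun p => F p + G p) = fun p => D w F p + D w G p := by
  funext p
  simp [D, fderiv_fun_add ((hF.differentiable (by simp)) p) ((hG.differentiable (by simp)) p)]

lemma D_sub {F G : Pt3 → ℝ} (w : Pt3) (hF : ContDiff ℝ (⊤ : ℕ∞) F) (hG : ContDiff ℝ (⊤ : ℕ∞) G) :
    D w (fun p => F p - G p) = fun p => D w F p - D w G p := by
  funext p
  simp [D, fderiv_fun_sub ((hF.differentiable (by simp)) p) ((hG.differentiable (by simp)) p)]

lemma D_neg {F : Pt3 → ℝ} (w : Pt3) :
    D w (fun p => -(F p)) = fun p => -(D w F p) := by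
  funext p; simp [D, fderiv_neg]

lemma D_const_mul {F : Pt3 → ℝ} (w : Pt3) (c : ℝ) (hF : ContDiff ℝ (⊤ : ℕ∞) F) :
    D w (fun p => c * F p) = fun p => c * D w F p := by
  funext p
  simp [D, fderiv_const_mul ((hF.differentiable (by simp)) p) c]

lemma D_const (w : Pt3) (c : ℝ) : D w (fun _ : Pt3 => c) = fun _ => 0 := by
  funext p; simp [D]

lemma D_sq {F : Pt3 → ℝ} (w : Pt3) (hF : ContDiff ℝ (⊤ : ℕ∞) F) :
    D w (fun p => (F p)^2) = fun p => 2 * F p * D w F p := by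
  have h : (fun p => (F p)^2) = fun p => F p * F p := by funext p; ring
  rw [h, D_mul w hF hF]; funext p; ring

lemma D_div {F G : Pt3 → ℝ} (w : Pt3) (hF : ContDiff ℝ (⊤ : ℕ∞) F) (hG : ContDiff ℝ (⊤ : ℕ∞) G)
    (hG0 : ∀ p, G p ≠ 0) :
    D w (fun p => F p / G p) = fun p => (D w F p * G p - F p * D w G p) / (G p)^2 := by
  have hq : ContDiff ℝ (⊤ : ℕ∞) (fun p => F p / G p) := hF.div hG hG0
  have key : (fun p => (F p / G p) * G p) = F := by
    funext p; field_simp [hG0 p]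
  have h2 := D_mul w hq hG
  rw [key] at h2
  funext p
  have h3 := congrFun h2 p
  have hGp := hG0 p
  field_simp at h3
  rw [eq_div_iff (pow_ne_zero 2 hGp)]
  linear_combination -h3

lemma D_sum {ι : Type*} (w : Pt3) (s : Finset ι) (F : ι → Pt3 → ℝ)
    (hF : ∀ i, ContDiff ℝ (⊤ : ℕ∞) (F i)) :
    D w (fun p => ∑ i ∈ s, F i p) = fun p => ∑ i ∈ s, D w (F i) p := by
  funext p
  simp [D, fderiv_fun_sum (fun i _ => ((hF i).differentiable (by simp)) p)]

end KPtoMKPaux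

open KPtoMKPaux

theorem kp_to_mkp_Backlund_M1 (N : ℕ) (u f V : Pt3 → ℝ) (q r S : Fin N → Pt3 → ℝ)
    (hu : ContDiff ℝ (⊤ : ℕ∞) u) (hq : ∀ j, ContDiff ℝ (⊤ : ℕ∞) (q j)) (hr : ∀ j, ContDiff ℝ (⊤ : ℕ∞) (r j))
    (hf : ContDiff ℝ (⊤ : ℕ∞) f) (hV : ContDiff ℝ (⊤ : ℕ∞) V) (hS : ∀ j, ContDiff ℝ (⊤ : ℕ∞) (S j))
    (hsol : SolvesKPESCS N u q r)
    (hdat : KPEigenDatum N u q r f V S)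
    (hf0 : ∀ p : Pt3, f p ≠ 0) :
    SolvesMKPESCS N
      (fun p => px f p / f p)
      (fun p => py f p / f p)
      (fun j => fun p => q j p / f p)
      (fun j => fun p => -(S j p)) := by
  classical
  obtain ⟨hVx, hSx, hSy, hfy, hft⟩ := hdat
  obtain ⟨hKP, hqyev, hryev⟩ := hsol
  clear hKP hryev
  -- differentiability shortcuts
  have hfd : Differentiable ℝ f := hf.differentiable (by simp)
  have hud : Differentiable ℝ u := hu.differentiable (by simp)
  have hf1 : ContDiff ℝ (⊤ : ℕ∞) (D ee1 f) := contDiff_D ee1 hf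
  have hf2 : ContDiff ℝ (⊤ : ℕ∞) (D ee1 (D ee1 f)) := contDiff_D ee1 hf1
  have hf2y : ContDiff ℝ (⊤ : ℕ∞) (D ee2 f) := contDiff_D ee2 hf
  -- conversion of basic partials
  have hpxf : px f = D ee1 f := px_eq hfd
  have hpyf : py f = D ee2 f := py_eq hfd
  have hpxf1 : px (D ee1 f) = D ee1 (D ee1 f) := px_eq (hf1.differentiable (by simp))
  have hpxf2 : px (D ee1 (D ee1 f)) = D ee1 (D ee1 (D ee1 f)) :=
    px_eq (hf2.differentiable (by simp))
  have hpxu : px u = D ee1 u := px_eq hud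
  have hpyu : py u = D ee2 u := py_eq hud
  have hpxV : px V = D ee1 V := px_eq (hV.differentiable (by simp))
  -- evolution equations as function identities
  have e_fy : D ee2 f = fun p => D ee1 (D ee1 f) p + u p * f p := by
    funext p
    have h := hfy p
    rw [hpxf, hpxf1, hpyf] at h
    exact h
  have e_ft : D ee3 f = fun p => D ee1 (D ee1 (D ee1 f)) p + 3/2 * u p * D ee1 f p
      + 3/4 * (D ee1 u p + V p) * f p + ∑ j, q j p * S j p := by
    funext p
    have h := hft p
    rw [pt_eq hfd, hpxf, hpxf1, hpxf2, hpxu] at h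
    exact h
  have e_Sx : ∀ j, D ee1 (S j) = fun p => r j p * f p := by
    intro j
    funext p
    have h := hSx j p
    rwa [px_eq ((hS j).differentiable (by simp))] at h
  have e_Vx : D ee1 V = D ee2 u := by
    funext p
    have h := hVx p
    rwa [hpxV, hpyu] at h
  -- commutation of mixed partials
  have c1 : D ee2 (D ee1 f) = D ee1 (D ee2 f) := D_comm hf ee2 ee1
  have c2 : D ee2 (D ee1 (D ee1 f)) = D ee1 (D ee1 (D ee2 f)) := by
    rw [D_comm hf1 ee2 ee1, c1]
  have c3 : D ee3 (D ee1 f) = D ee1 (D ee3 f) := D_comm hf ee3 ee1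
  -- nonvanishing facts
  have hsq : ∀ p : Pt3, (f p)^2 ≠ 0 := fun p => pow_ne_zero 2 (hf0 p)
  have hsq2 : ∀ p : Pt3, ((f p)^2)^2 ≠ 0 := fun p => pow_ne_zero 2 (hsq p)
  have hsq3 : ∀ p : Pt3, (((f p)^2)^2)^2 ≠ 0 := fun p => pow_ne_zero 2 (hsq2 p)
  -- sources
  have hSAc : ContDiff ℝ (⊤ : ℕ∞) (fun p => ∑ j, q j p * S j p) :=
    ContDiff.sum fun i _ => (hq i).mul (hS i)
  have e_SA : D ee1 (fun p => ∑ j, q j p * S j p)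
      = fun p => (∑ j, D ee1 (q j) p * S j p) + (∑ j, q j p * r j p) * f p := by
    rw [D_sum ee1 Finset.univ _ (fun j => (hq j).mul (hS j))]
    funext p
    have hterm : ∀ j : Fin N, D ee1 (fun p => q j p * S j p) p
        = D ee1 (q j) p * S j p + q j p * (r j p * f p) := by
      intro j
      rw [D_mul ee1 (hq j) (hS j)]
      simp only [e_Sx j]
    rw [Finset.sum_congr rfl (fun j _ => hterm j), Finset.sum_add_distrib]
    congr 1
    rw [Finset.sum_mul]
    exact Finset.sum_congr rfl (fun j _ => by ring)
  have e_src : (fun p' : Pt3 => ∑ j, q j p' / f p' * -(S j p'))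
      = fun p' => -((∑ j, q j p' * S j p') / f p') := by
    funext p'
    calc ∑ j, q j p' / f p' * -(S j p') = ∑ j, -(q j p' * S j p' / f p') :=
          Finset.sum_congr rfl (fun j _ => by ring)
      _ = -∑ j, q j p' * S j p' / f p' := by rw [Finset.sum_neg_distrib]
      _ = -((∑ j, q j p' * S j p') / f p') := by rw [Finset.sum_div]
  have hsrc : ContDiff ℝ (⊤ : ℕ∞) (fun p' => -((∑ j, q j p' * S j p') / f p')) :=
    (hSAc.div hf hf0).neg
  have e_psrc : px (fun p' => -((∑ j, q j p' * S j p') / f p'))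
      = D ee1 (fun p' => -((∑ j, q j p' * S j p') / f p')) :=
    px_eq (hsrc.differentiable (by simp))
  -- smoothness of the transformed fields
  have hv : ContDiff ℝ (⊤ : ℕ∞) (fun p => D ee1 f p / f p) := hf1.div hf hf0
  have hW : ContDiff ℝ (⊤ : ℕ∞) (fun p => D ee2 f p / f p) := hf2y.div hf hf0
  refine ⟨?_, ?_, ?_, ?_⟩
  · -- potential equation
    intro p
    simp only [hpxf, hpyf]
    simp only [px_eq (hW.differentiable (by simp)), py_eq (hv.differentiable (by simp))]
    simp only [D_div ee1 hf2y hf hf0, D_div ee2 hf1 hf hf0]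
    rw [c1]; ring
  · -- the mKP equation with sources
    intro p
    have e1v : px (fun p => D ee1 f p / f p) = D ee1 (fun p => D ee1 f p / f p) :=
      px_eq (hv.differentiable (by simp))
    have hv1 : ContDiff ℝ (⊤ : ℕ∞) (D ee1 (fun p => D ee1 f p / f p)) := contDiff_D ee1 hv
    have e2v : px (D ee1 (fun p => D ee1 f p / f p))
        = D ee1 (D ee1 (fun p => D ee1 f p / f p)) := px_eq (hv1.differentiable (by simp))
    have hv2 : ContDiff ℝ (⊤ : ℕ∞) (D ee1 (D ee1 (fun p => D ee1 f p / f p))) := contDiff_D ee1 hv1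
    have e3v : px (D ee1 (D ee1 (fun p => D ee1 f p / f p)))
        = D ee1 (D ee1 (D ee1 (fun p => D ee1 f p / f p))) := px_eq (hv2.differentiable (by simp))
    have e4v : pt (fun p => D ee1 f p / f p) = D ee3 (fun p => D ee1 f p / f p) :=
      pt_eq (hv.differentiable (by simp))
    have eWy : py (fun p => D ee2 f p / f p) = D ee2 (fun p => D ee2 f p / f p) :=
      py_eq (hW.differentiable (by simp))
    simp only [hpxf, hpyf]
    simp only [e_src]
    simp only [e1v, e2v, e3v, e4v, eWy, e_psrc]
    simp (disch := first | assumption | fun_prop) only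
      [D_div, D_mul, D_add, D_sub, D_neg, D_const_mul, D_sq, c1, c2, c3,
       D_const, e_fy, e_ft, e_Vx, e_SA]
    field_simp [hf0 p]
    have h15 : f p ^ 15 * (f p)⁻¹ ^ 15 = 1 := by
      rw [← mul_pow, mul_inv_cancel₀ (hf0 p), one_pow]
    ring
  · -- q equations
    intro j p
    have hqj := hq j
    have hA : ContDiff ℝ (⊤ : ℕ∞) (fun p => q j p / f p) := hqj.div hf hf0
    have hq1 : ContDiff ℝ (⊤ : ℕ∞) (D ee1 (q j)) := contDiff_D ee1 hqj
    have eA1 : px (fun p => q j p / f p) = D ee1 (fun p => q j p / f p) :=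
      px_eq (hA.differentiable (by simp))
    have hA1 : ContDiff ℝ (⊤ : ℕ∞) (D ee1 (fun p => q j p / f p)) := contDiff_D ee1 hA
    have eA2 : px (D ee1 (fun p => q j p / f p)) = D ee1 (D ee1 (fun p => q j p / f p)) :=
      px_eq (hA1.differentiable (by simp))
    have eA3 : py (fun p => q j p / f p) = D ee2 (fun p => q j p / f p) :=
      py_eq (hA.differentiable (by simp))
    have e_qy : D ee2 (q j) = fun p => D ee1 (D ee1 (q j)) p + u p * q j p := by
      funext p'
      have h := hqyev j p'
      rw [px_eq (hqj.differentiable (by simp)), px_eq (hq1.differentiable (by simp)),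
        py_eq (hqj.differentiable (by simp))] at h
      exact h
    simp only [hpxf]
    simp only [eA3, eA1, eA2]
    simp (disch := first | assumption | fun_prop) only
      [D_div, D_mul, D_add, D_sub, D_neg, D_const_mul, D_sq, D_const, e_qy, e_fy]
    field_simp [hf0 p]
    ring
  · -- r equations
    intro j p
    have hrj := hr j
    have hSj := hS j
    have hnS : ContDiff ℝ (⊤ : ℕ∞) (fun p => -(S j p)) := hSj.neg
    have b1 : py (fun p => -(S j p)) = D ee2 (fun p => -(S j p)) :=
      py_eq (hnS.differentiable (by simp))
    have b2 : px (fun p => -(S j p)) = D ee1 (fun p => -(S j p)) :=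
      px_eq (hnS.differentiable (by simp))
    have hnS1 : ContDiff ℝ (⊤ : ℕ∞) (D ee1 (fun p => -(S j p))) := contDiff_D ee1 hnS
    have b3 : px (D ee1 (fun p => -(S j p))) = D ee1 (D ee1 (fun p => -(S j p))) :=
      px_eq (hnS1.differentiable (by simp))
    have hSyv : D ee2 (S j) p = r j p * D ee1 f p - D ee1 (r j) p * f p := by
      have h := hSy j p
      rwa [py_eq (hSj.differentiable (by simp)), hpxf,
        px_eq (hrj.differentiable (by simp))] at h
    simp only [hpxf]
    simp only [b1, b2, b3]
    simp (disch := first | assumption | fun_prop) only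
      [D_neg, e_Sx j, D_mul, D_add, D_sub, D_const_mul, D_const, hSyv]
    field_simp [hf0 p]
    ring
end
end
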